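/- Let R be a semisimple ring and let (A,C) be a pre-Koszul pair. Then (K_l^•(A,C), d_l^•) is a cochain complex in the category of graded left C-comodules (i.e. d_l^{n+1} ∘ d_l^n = 0 and each d_l^n is a morphism of graded left C-comodules), and analogously (K_r^•(A,C), d_r^•) is a cochain complex in the category of graded right C-comodules. -/

import Mathlib

open MulOpposite

set_option maxHeartbeats 1000000
set_option synthInstance.maxHeartbeats 400000
set_option maxSynthPendingDepth 3

namespace KP

noncomputable section

section PT

variable (S : Type) [Ring S]
variable (M N : Type) [AddCommGroup M] [AddCommGroup N] [Module Sᵐᵒᵖ M] [Module S N]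

/-- The defining relations of the tensor product of a right `S`-module and a
left `S`-module over the (possibly noncommutative) ring `S`. -/
def ptRel : Submodule ℤ (TensorProduct ℤ M N) :=
  Submodule.span ℤ {x | ∃ (r : S) (m : M) (n : N), x = (op r • m) ⊗ₜ[ℤ] n - m ⊗ₜ[ℤ] (r • n)}

/-- The tensor product `M ⊗_S N` of a right `S`-module `M` and a left `S`-module `N`. -/
def PTensor : Type := (TensorProduct ℤ M N) ⧸ ptRel S M N

instance : AddCommGroup (PTensor S M N) :=
  inferInstanceAs (AddCommGroup ((TensorProduct ℤ M N) ⧸ ptRel S M N))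

variable {S M N}

/-- The canonical image of `m ⊗ n` in `M ⊗_S N`. -/
def PTensor.tmul (m : M) (n : N) : PTensor S M N :=
  Submodule.Quotient.mk (m ⊗ₜ[ℤ] n)

notation:100 m:101 " ⊙[" Sb "] " n:101 => KP.PTensor.tmul (S := Sb) m n

namespace PTensor

theorem add_tmul (m m' : M) (n : N) :
    ((m + m') ⊙[S] n) = (m ⊙[S] n) + (m' ⊙[S] n) := by
  unfold PTensor.tmul
  rw [TensorProduct.add_tmul, Submodule.Quotient.mk_add]; rfl

theorem tmul_add (m : M) (n n' : N) :
    (m ⊙[S] (n + n')) = (m ⊙[S] n) + (m ⊙[S] n') := by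
  unfold PTensor.tmul
  rw [TensorProduct.tmul_add, Submodule.Quotient.mk_add]; rfl

theorem zero_tmul (n : N) : ((0 : M) ⊙[S] n) = 0 := by
  unfold PTensor.tmul
  rw [TensorProduct.zero_tmul]; rfl

theorem tmul_zero (m : M) : (m ⊙[S] (0 : N)) = 0 := by
  unfold PTensor.tmul
  rw [TensorProduct.tmul_zero]; rfl

theorem balance (r : S) (m : M) (n : N) :
    (((op r • m : M)) ⊙[S] n) = (m ⊙[S] (r • n)) := by
  unfold PTensor.tmul
  exact (Submodule.Quotient.eq _).mpr (Submodule.subset_span ⟨r, m, n, rfl⟩)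

protected theorem ind {p : PTensor S M N → Prop} (h0 : p 0)
    (htm : ∀ m n, p (m ⊙[S] n)) (hadd : ∀ x y, p x → p y → p (x + y)) :
    ∀ z, p z := by
  intro z
  obtain ⟨t, rfl⟩ := Submodule.Quotient.mk_surjective _ z
  induction t with
  | zero => exact h0
  | tmul m n => exact htm m n
  | add x y hx hy =>
      rw [Submodule.Quotient.mk_add]
      exact hadd _ _ hx hy

/-- Lift a balanced biadditive map to the tensor product. -/
def lift {P : Type} [AddCommGroup P] (f : M → N → P)
    (h1 : ∀ m m' n, f (m + m') n = f m n + f m' n)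
    (h2 : ∀ m n n', f m (n + n') = f m n + f m n')
    (hb : ∀ (r : S) m n, f (op r • m) n = f m (r • n)) :
    PTensor S M N →+ P :=
  let F : M →+ N →+ P :=
    AddMonoidHom.mk' (fun m => AddMonoidHom.mk' (f m) (h2 m))
      (fun m m' => by ext n; exact h1 m m' n)
  let G : TensorProduct ℤ M N →+ P :=
    TensorProduct.liftAddHom F (fun z m n => by
      have : F (z • m) = z • F m := map_zsmul F z m
      rw [this]
      simp [map_zsmul])
  (Submodule.liftQ (ptRel S M N) G.toIntLinearMap (by
      rw [ptRel, Submodule.span_le]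
      rintro x ⟨r, m, n, rfl⟩
      simp only [SetLike.mem_coe, LinearMap.mem_ker, map_sub,
        AddMonoidHom.coe_toIntLinearMap]
      rw [TensorProduct.liftAddHom_tmul, TensorProduct.liftAddHom_tmul]
      show f (op r • m) n - f m (r • n) = 0
      rw [hb]
      exact sub_self _)).toAddMonoidHom

@[simp] theorem lift_tmul {P : Type} [AddCommGroup P] (f : M → N → P)
    (h1 : ∀ m m' n, f (m + m') n = f m n + f m' n)
    (h2 : ∀ m n n', f m (n + n') = f m n + f m n')
    (hb : ∀ (r : S) m n, f (op r • m) n = f m (r • n)) (m : M) (n : N) :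
    lift f h1 h2 hb (m ⊙[S] n) = f m n := by
  with_unfolding_all rfl

theorem addHom_ext {P : Type} [AddCommGroup P] {g g' : PTensor S M N →+ P}
    (h : ∀ m n, g (m ⊙[S] n) = g' (m ⊙[S] n)) : g = g' := by
  ext z
  induction z using PTensor.ind with
  | h0 => simp
  | htm m n => exact h m n
  | hadd x y hx hy => simp [hx, hy]

/-- Functoriality of the tensor product. -/
def map {M' N' : Type} [AddCommGroup M'] [AddCommGroup N'] [Module Sᵐᵒᵖ M'] [Module S N']
    (f : M →+ M') (g : N →+ N')
    (hf : ∀ (r : S) m, f (op r • m) = op r • f m)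
    (hg : ∀ (r : S) n, g (r • n) = r • g n) :
    PTensor S M N →+ PTensor S M' N' :=
  lift (fun m n => (f m) ⊙[S] (g n))
    (fun m m' n => by (try dsimp only); rw [map_add, add_tmul])
    (fun m n n' => by (try dsimp only); rw [map_add, tmul_add])
    (fun r m n => by (try dsimp only); rw [hf, hg, balance])

@[simp] theorem map_tmul {M' N' : Type} [AddCommGroup M'] [AddCommGroup N']
    [Module Sᵐᵒᵖ M'] [Module S N'] (f : M →+ M') (g : N →+ N')
    (hf : ∀ (r : S) m, f (op r • m) = op r • f m)
    (hg : ∀ (r : S) n, g (r • n) = r • g n) (m : M) (n : N) :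
    map f g hf hg (m ⊙[S] n) = (f m) ⊙[S] (g n) :=
  lift_tmul _ _ _ _ m n

section Left

variable {T : Type} [Ring T] [Module T M] [SMulCommClass T Sᵐᵒᵖ M]

/-- The left action on `M ⊗_S N` induced by a compatible left action on `M`. -/
def lsmulHom (t : T) : PTensor S M N →+ PTensor S M N :=
  map (AddMonoidHom.mk' (fun m => t • m) (fun a b => smul_add t a b)) (AddMonoidHom.id N)
    (fun r m => (smul_comm t (op r) m))
    (fun _ _ => rfl)

theorem lsmulHom_tmul (t : T) (m : M) (n : N) :
    lsmulHom t (m ⊙[S] n) = ((t • m) ⊙[S] n) :=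
  map_tmul _ _ _ _ m n

instance instModuleLeft : Module T (PTensor S M N) where
  smul t x := lsmulHom t x
  one_smul x := by
    show lsmulHom 1 x = x
    induction x using PTensor.ind with
    | h0 => simp
    | htm m n => show lsmulHom 1 (m ⊙[S] n) = m ⊙[S] n; rw [lsmulHom_tmul]; simp
    | hadd x y hx hy => rw [map_add, hx, hy]
  mul_smul t t' x := by
    show lsmulHom (t * t') x = lsmulHom t (lsmulHom t' x)
    induction x using PTensor.ind with
    | h0 => simp
    | htm m n => simp only [lsmulHom_tmul]; simp [mul_smul]
    | hadd x y hx hy => simp only [map_add, hx, hy]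
  smul_zero t := by show lsmulHom t 0 = 0; simp
  smul_add t x y := by show lsmulHom t (x + y) = lsmulHom t x + lsmulHom t y; simp
  add_smul t t' x := by
    show lsmulHom (t + t') x = lsmulHom t x + lsmulHom t' x
    induction x using PTensor.ind with
    | h0 => simp
    | htm m n =>
        simp only [lsmulHom_tmul]
        show ((t + t') • m) ⊙[S] _ = _
        rw [add_smul, add_tmul]
    | hadd x y hx hy => simp only [map_add, hx, hy]; abel
  zero_smul x := by
    show lsmulHom 0 x = 0
    induction x using PTensor.ind with
    | h0 => simp
    | htm m n =>
        simp only [lsmulHom_tmul]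
        show ((0 : T) • m) ⊙[S] _ = _
        rw [zero_smul, zero_tmul]
    | hadd x y hx hy => rw [map_add, hx, hy, add_zero]

@[simp] theorem lsmul_tmul (t : T) (m : M) (n : N) :
    t • (m ⊙[S] n) = ((t • m) ⊙[S] n) := by
  show lsmulHom t (m ⊙[S] n) = _
  rw [lsmulHom_tmul]

end Left

section Right

variable {T : Type} [Ring T] [Module Tᵐᵒᵖ N] [SMulCommClass S Tᵐᵒᵖ N]

/-- The right action on `M ⊗_S N` induced by a compatible right action on `N`. -/
def rsmulHom (t : Tᵐᵒᵖ) : PTensor S M N →+ PTensor S M N :=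
  map (AddMonoidHom.id M) (AddMonoidHom.mk' (fun n => t • n) (fun a b => smul_add t a b))
    (fun _ _ => rfl)
    (fun r n => (smul_comm r t n).symm)

theorem rsmulHom_tmul (t : Tᵐᵒᵖ) (m : M) (n : N) :
    rsmulHom t (m ⊙[S] n) = (m ⊙[S] (t • n)) :=
  map_tmul _ _ _ _ m n

instance instModuleRight : Module Tᵐᵒᵖ (PTensor S M N) where
  smul t x := rsmulHom t x
  one_smul x := by
    show rsmulHom 1 x = x
    induction x using PTensor.ind with
    | h0 => simp
    | htm m n => rw [rsmulHom_tmul]; simp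
    | hadd x y hx hy => rw [map_add, hx, hy]
  mul_smul t t' x := by
    show rsmulHom (t * t') x = rsmulHom t (rsmulHom t' x)
    induction x using PTensor.ind with
    | h0 => simp
    | htm m n => simp only [rsmulHom_tmul]; simp [mul_smul]
    | hadd x y hx hy => simp only [map_add, hx, hy]
  smul_zero t := by show rsmulHom t 0 = 0; simp
  smul_add t x y := by show rsmulHom t (x + y) = rsmulHom t x + rsmulHom t y; simp
  add_smul t t' x := by
    show rsmulHom (t + t') x = rsmulHom t x + rsmulHom t' x
    induction x using PTensor.ind with
    | h0 => simp
    | htm m n =>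
        simp only [rsmulHom_tmul]
        show _ ⊙[S] ((t + t') • n) = _
        rw [add_smul, tmul_add]
    | hadd x y hx hy => simp only [map_add, hx, hy]; abel
  zero_smul x := by
    show rsmulHom 0 x = 0
    induction x using PTensor.ind with
    | h0 => simp
    | htm m n =>
        simp only [rsmulHom_tmul]
        show _ ⊙[S] ((0 : Tᵐᵒᵖ) • n) = _
        rw [zero_smul, tmul_zero]
    | hadd x y hx hy => rw [map_add, hx, hy, add_zero]

@[simp] theorem rsmul_tmul (t : Tᵐᵒᵖ) (m : M) (n : N) :
    t • (m ⊙[S] n) = (m ⊙[S] (t • n)) := by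
  show rsmulHom t (m ⊙[S] n) = _
  rw [rsmulHom_tmul]

end Right

instance instSMulCommClassPT {T T' : Type} [Ring T] [Ring T']
    [Module T M] [SMulCommClass T Sᵐᵒᵖ M] [Module T'ᵐᵒᵖ N] [SMulCommClass S T'ᵐᵒᵖ N] :
    SMulCommClass T T'ᵐᵒᵖ (PTensor S M N) where
  smul_comm t t' x := by
    show lsmulHom t (rsmulHom t' x) = rsmulHom t' (lsmulHom t x)
    induction x using PTensor.ind with
    | h0 => simp
    | htm m n =>
        rw [rsmulHom_tmul, lsmulHom_tmul, lsmulHom_tmul, rsmulHom_tmul]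
    | hadd x y hx hy => simp only [map_add, hx, hy]

end PTensor

end PT

section Graded

variable (R : Type) [Ring R]

/-- A graded `R`-ring: a ring `A` together with a ring morphism `u : R → A`
and an `ℕ`-grading for which the multiplication is graded and `u` lands in degree `0`. -/
structure GRing where
  A : Type
  [ring : Ring A]
  u : R →+* A
  gr : ℕ → AddSubgroup A
  [dec : DirectSum.Decomposition gr]
  mul_mem : ∀ {p q : ℕ} {a b : A}, a ∈ gr p → b ∈ gr q → a * b ∈ gr (p + q)
  u_mem : ∀ r : R, u r ∈ gr 0

attribute [instance] GRing.ring GRing.dec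

namespace GRing

variable {R} (A : GRing R)

instance : Module R A.A := Module.compHom A.A A.u

instance : Module Rᵐᵒᵖ A.A := Module.compHom A.A (RingHom.op A.u)

theorem lsmul_def (r : R) (a : A.A) : r • a = A.u r * a := rfl

theorem rsmul_def (r : R) (a : A.A) : op r • a = a * A.u r := rfl

instance : SMulCommClass R Rᵐᵒᵖ A.A where
  smul_comm r s a := by
    rw [lsmul_def]
    show A.u r * (a * A.u s.unop) = (A.u r * a) * A.u s.unop
    rw [mul_assoc]

/-- The homogeneous component of degree `n` of a graded ring. -/
abbrev cmp (n : ℕ) : Type := ↥(A.gr n)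

theorem cmp_lsmul_mem (r : R) (n : ℕ) (x : A.cmp n) : A.u r * (x : A.A) ∈ A.gr n := by
  have := A.mul_mem (A.u_mem r) x.2
  rwa [zero_add] at this

theorem cmp_rsmul_mem (r : R) (n : ℕ) (x : A.cmp n) : (x : A.A) * A.u r ∈ A.gr n := by
  have := A.mul_mem x.2 (A.u_mem r)
  rwa [add_zero] at this

instance (n : ℕ) : Module R (A.cmp n) where
  smul r x := ⟨A.u r * (x : A.A), A.cmp_lsmul_mem r n x⟩
  one_smul x := by
    apply Subtype.ext
    show A.u 1 * (x : A.A) = (x : A.A)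
    rw [map_one, one_mul]
  mul_smul r s x := by
    apply Subtype.ext
    show A.u (r * s) * (x : A.A) = A.u r * (A.u s * (x : A.A))
    rw [map_mul, mul_assoc]
  smul_zero r := by
    apply Subtype.ext
    show A.u r * (0 : A.A) = (0 : A.A)
    rw [mul_zero]
  smul_add r x y := by
    apply Subtype.ext
    show A.u r * ((x : A.A) + (y : A.A)) = A.u r * (x : A.A) + A.u r * (y : A.A)
    rw [mul_add]
  add_smul r s x := by
    apply Subtype.ext
    show A.u (r + s) * (x : A.A) = A.u r * (x : A.A) + A.u s * (x : A.A)
    rw [map_add, add_mul]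
  zero_smul x := by
    apply Subtype.ext
    show A.u 0 * (x : A.A) = (0 : A.A)
    rw [map_zero, zero_mul]

instance (n : ℕ) : Module Rᵐᵒᵖ (A.cmp n) where
  smul r x := ⟨(x : A.A) * A.u r.unop, A.cmp_rsmul_mem r.unop n x⟩
  one_smul x := by
    apply Subtype.ext
    show (x : A.A) * A.u (1 : Rᵐᵒᵖ).unop = (x : A.A)
    rw [MulOpposite.unop_one, map_one, mul_one]
  mul_smul r s x := by
    apply Subtype.ext
    show (x : A.A) * A.u (r * s).unop = ((x : A.A) * A.u s.unop) * A.u r.unop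
    rw [MulOpposite.unop_mul, map_mul, mul_assoc]
  smul_zero r := by
    apply Subtype.ext
    show (0 : A.A) * A.u r.unop = (0 : A.A)
    rw [zero_mul]
  smul_add r x y := by
    apply Subtype.ext
    show ((x : A.A) + (y : A.A)) * A.u r.unop = (x : A.A) * A.u r.unop + (y : A.A) * A.u r.unop
    rw [add_mul]
  add_smul r s x := by
    apply Subtype.ext
    show (x : A.A) * A.u (r + s).unop = (x : A.A) * A.u r.unop + (x : A.A) * A.u s.unop
    rw [MulOpposite.unop_add, map_add, mul_add]
  zero_smul x := by
    apply Subtype.ext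
    show (x : A.A) * A.u (0 : Rᵐᵒᵖ).unop = (0 : A.A)
    rw [MulOpposite.unop_zero, map_zero, mul_zero]

theorem cmp_lsmul_def (r : R) (n : ℕ) (x : A.cmp n) :
    ((r • x : A.cmp n) : A.A) = A.u r * (x : A.A) := rfl

theorem cmp_rsmul_def (r : R) (n : ℕ) (x : A.cmp n) :
    ((op r • x : A.cmp n) : A.A) = (x : A.A) * A.u r := rfl

instance (n : ℕ) : SMulCommClass R Rᵐᵒᵖ (A.cmp n) where
  smul_comm r s x := by
    apply Subtype.ext
    show A.u r * ((x : A.A) * A.u s.unop) = (A.u r * (x : A.A)) * A.u s.unop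
    rw [mul_assoc]

/-- The inclusion of a homogeneous component. -/
def incl (n : ℕ) : A.cmp n →+ A.A :=
  AddMonoidHom.mk' (fun x => (x : A.A)) (fun _ _ => rfl)

/-- The projection onto a homogeneous component. -/
def proj (n : ℕ) : A.A →+ A.cmp n :=
  AddMonoidHom.mk' (fun a => DirectSum.decompose A.gr a n) (by
    intro a b
    try dsimp only
    rw [DirectSum.decompose_add, DirectSum.add_apply])

end GRing

/-- A connected graded `R`-ring: a graded `R`-ring for which `u` is an isomorphism
onto the degree-`0` component, with inverse induced by `v`. -/
structure ConnGRing extends GRing R where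
  v : A →+ R
  v_u : ∀ r : R, v (u r) = r
  v_gr : ∀ n : ℕ, n ≠ 0 → ∀ a ∈ gr n, v a = 0
  proj0 : ∀ a : A, ((DirectSum.decompose gr a 0 : ↥(gr 0)) : A) = u (v a)
  v_mul : ∀ a b : A, v (a * b) = v a * v b

namespace ConnGRing

variable {R} (A : ConnGRing R)

theorem v_lsmul (r : R) (a : A.A) : A.v (r • a) = r * A.v a := by
  show A.v (A.u r * a) = r * A.v a
  rw [A.v_mul, A.v_u]

theorem v_rsmul (r : R) (a : A.A) : A.v (op r • a) = A.v a * r := by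
  show A.v (a * A.u r) = A.v a * r
  rw [A.v_mul, A.v_u]

end ConnGRing

/-- The data underlying a graded `R`-coring. -/
structure PreGCoring where
  C : Type
  [acg : AddCommGroup C]
  [modL : Module R C]
  [modR : Module Rᵐᵒᵖ C]
  [scc : SMulCommClass R Rᵐᵒᵖ C]
  gr : ℕ → AddSubgroup C
  [dec : DirectSum.Decomposition gr]
  gr_lsmul : ∀ (r : R) (n : ℕ), ∀ c ∈ gr n, r • c ∈ gr n
  gr_rsmul : ∀ (r : Rᵐᵒᵖ) (n : ℕ), ∀ c ∈ gr n, r • c ∈ gr n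
  Δ : C →+ PTensor R C C
  Δ_lsmul : ∀ (r : R) (c : C), Δ (r • c) = r • Δ c
  Δ_rsmul : ∀ (r : Rᵐᵒᵖ) (c : C), Δ (r • c) = r • Δ c
  ε : C →+ R
  ε_lsmul : ∀ (r : R) (c : C), ε (r • c) = r * ε c
  ε_rsmul : ∀ (r : R) (c : C), ε (op r • c) = ε c * r

attribute [instance] PreGCoring.acg PreGCoring.modL PreGCoring.modR PreGCoring.scc
  PreGCoring.dec

namespace PreGCoring

variable {R} (D : PreGCoring R)

/-- `ε ⊗ id` followed by the action, i.e. `x ⊗ y ↦ ε(x) • y`. -/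
def counitL : PTensor R D.C D.C →+ D.C :=
  PTensor.lift (fun x y => D.ε x • y)
    (fun x x' y => by (try dsimp only); rw [map_add, add_smul])
    (fun x y y' => by (try dsimp only); rw [smul_add])
    (fun r x y => by (try dsimp only); rw [D.ε_rsmul, mul_smul])

/-- `id ⊗ ε` followed by the action, i.e. `x ⊗ y ↦ x • ε(y)`. -/
def counitR : PTensor R D.C D.C →+ D.C :=
  PTensor.lift (fun x y => op (D.ε y) • x)
    (fun x x' y => by (try dsimp only); rw [smul_add])
    (fun x y y' => by (try dsimp only); rw [map_add, op_add, add_smul])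
    (fun r x y => by
      try dsimp only
      rw [D.ε_lsmul, op_mul, mul_smul])

/-- `(Δ ⊗ id)` composed with the associator, pointwise `x ⊗ y ↦ Σ x₁ ⊗ (x₂ ⊗ y)`. -/
def ΔL : PTensor R D.C D.C →+ PTensor R D.C (PTensor R D.C D.C) :=
  PTensor.lift
    (fun x y => (PTensor.lift (fun x1 x2 => x1 ⊙[R] (x2 ⊙[R] y))
      (fun a a' b => by (try dsimp only); rw [PTensor.add_tmul])
      (fun a b b' => by (try dsimp only); rw [PTensor.add_tmul, PTensor.tmul_add])
      (fun r a b => by (try dsimp only); rw [PTensor.balance, PTensor.lsmul_tmul]) (D.Δ x)))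
    (fun x x' y => by (try dsimp only); rw [map_add, map_add])
    (fun x y y' => by
      try dsimp only
      induction D.Δ x using PTensor.ind with
      | h0 => simp
      | htm a b => rw [PTensor.lift_tmul, PTensor.lift_tmul, PTensor.lift_tmul,
          PTensor.tmul_add, PTensor.tmul_add]
      | hadd z w hz hw => simp only [map_add, hz, hw]; abel)
    (fun r x y => by
      try dsimp only
      rw [D.Δ_rsmul]
      induction D.Δ x using PTensor.ind with
      | h0 => simp
      | htm a b =>
          rw [PTensor.rsmul_tmul, PTensor.lift_tmul, PTensor.lift_tmul,
            PTensor.balance]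
      | hadd z w hz hw => simp only [smul_add, map_add, hz, hw])

/-- `id ⊗ Δ`, pointwise `x ⊗ y ↦ x ⊗ Δ(y)`. -/
def ΔR : PTensor R D.C D.C →+ PTensor R D.C (PTensor R D.C D.C) :=
  PTensor.map (AddMonoidHom.id D.C) D.Δ (fun _ _ => rfl) (fun r c => D.Δ_lsmul r c)

/-- Homogeneous components of (the underlying space of) a graded coring. -/
abbrev cmp (n : ℕ) : Type := ↥(D.gr n)

instance (n : ℕ) : Module R (D.cmp n) where
  smul r x := ⟨r • (x : D.C), D.gr_lsmul r n _ x.2⟩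
  one_smul x := by apply Subtype.ext; show (1 : R) • (x : D.C) = _; rw [one_smul]
  mul_smul r s x := by apply Subtype.ext; show (r * s) • (x : D.C) = _; rw [mul_smul]; rfl
  smul_zero r := by apply Subtype.ext; show r • (0 : D.C) = (0 : D.C); rw [smul_zero]
  smul_add r x y := by apply Subtype.ext; show r • ((x : D.C) + y) = _; rw [smul_add]; rfl
  add_smul r s x := by apply Subtype.ext; show (r + s) • (x : D.C) = _; rw [add_smul]; rfl
  zero_smul x := by apply Subtype.ext; show (0 : R) • (x : D.C) = (0 : D.C); rw [zero_smul]

instance (n : ℕ) : Module Rᵐᵒᵖ (D.cmp n) where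
  smul r x := ⟨r • (x : D.C), D.gr_rsmul r n _ x.2⟩
  one_smul x := by apply Subtype.ext; show (1 : Rᵐᵒᵖ) • (x : D.C) = _; rw [one_smul]
  mul_smul r s x := by apply Subtype.ext; show (r * s) • (x : D.C) = _; rw [mul_smul]; rfl
  smul_zero r := by apply Subtype.ext; show r • (0 : D.C) = (0 : D.C); rw [smul_zero]
  smul_add r x y := by apply Subtype.ext; show r • ((x : D.C) + y) = _; rw [smul_add]; rfl
  add_smul r s x := by apply Subtype.ext; show (r + s) • (x : D.C) = _; rw [add_smul]; rfl
  zero_smul x := by apply Subtype.ext; show (0 : Rᵐᵒᵖ) • (x : D.C) = (0 : D.C); rw [zero_smul]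

instance (n : ℕ) : SMulCommClass R Rᵐᵒᵖ (D.cmp n) where
  smul_comm r s x := by
    apply Subtype.ext
    show r • s • (x : D.C) = s • r • (x : D.C)
    rw [smul_comm]

theorem cmp_lsmul_def (r : R) (n : ℕ) (x : D.cmp n) :
    ((r • x : D.cmp n) : D.C) = r • (x : D.C) := rfl

theorem cmp_rsmul_def (r : Rᵐᵒᵖ) (n : ℕ) (x : D.cmp n) :
    ((r • x : D.cmp n) : D.C) = r • (x : D.C) := rfl

/-- The inclusion of a homogeneous component. -/
def incl (n : ℕ) : D.cmp n →+ D.C :=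
  AddMonoidHom.mk' (fun x => (x : D.C)) (fun _ _ => rfl)

/-- The projection onto a homogeneous component. -/
def proj (n : ℕ) : D.C →+ D.cmp n :=
  AddMonoidHom.mk' (fun c => DirectSum.decompose D.gr c n) (by
    intro a b
    try dsimp only
    rw [DirectSum.decompose_add, DirectSum.add_apply])

theorem proj_of_mem {n : ℕ} {c : D.C} (h : c ∈ D.gr n) : D.proj n c = ⟨c, h⟩ :=
  Subtype.ext (DirectSum.decompose_of_mem_same D.gr h)

theorem proj_of_mem_ne {m n : ℕ} {c : D.C} (h : c ∈ D.gr m) (hmn : m ≠ n) :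
    D.proj n c = 0 :=
  Subtype.ext (DirectSum.decompose_of_mem_ne D.gr h hmn)

theorem proj_lsmul (r : R) (n : ℕ) (c : D.C) :
    ((D.proj n (r • c) : D.cmp n) : D.C) = r • ((D.proj n c : D.cmp n) : D.C) := by
  induction c using DirectSum.Decomposition.inductionOn D.gr with
  | zero => simp
  | @homogeneous i m =>
      by_cases hin : i = n
      · subst hin
        rw [D.proj_of_mem m.2, D.proj_of_mem (D.gr_lsmul r i _ m.2)]
      · rw [D.proj_of_mem_ne m.2 hin, D.proj_of_mem_ne (D.gr_lsmul r i _ m.2) hin]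
        simp
  | add c c' hc hc' =>
      rw [smul_add, map_add, map_add]
      show _ = r • (((D.proj n c : D.cmp n) : D.C) + ((D.proj n c' : D.cmp n) : D.C))
      rw [smul_add, ← hc, ← hc']
      rfl

theorem proj_rsmul (r : Rᵐᵒᵖ) (n : ℕ) (c : D.C) :
    ((D.proj n (r • c) : D.cmp n) : D.C) = r • ((D.proj n c : D.cmp n) : D.C) := by
  induction c using DirectSum.Decomposition.inductionOn D.gr with
  | zero => simp
  | @homogeneous i m =>
      by_cases hin : i = n
      · subst hin
        rw [D.proj_of_mem m.2, D.proj_of_mem (D.gr_rsmul r i _ m.2)]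
      · rw [D.proj_of_mem_ne m.2 hin, D.proj_of_mem_ne (D.gr_rsmul r i _ m.2) hin]
        simp
  | add c c' hc hc' =>
      rw [smul_add, map_add, map_add]
      show _ = r • (((D.proj n c : D.cmp n) : D.C) + ((D.proj n c' : D.cmp n) : D.C))
      rw [smul_add, ← hc, ← hc']
      rfl

end PreGCoring

/-- A graded `R`-coring. -/
structure GCoring extends PreGCoring R where
  coassoc : ∀ c : C, toPreGCoring.ΔL (Δ c) = toPreGCoring.ΔR (Δ c)
  counit_l : ∀ c : C, toPreGCoring.counitL (Δ c) = c
  counit_r : ∀ c : C, toPreGCoring.counitR (Δ c) = c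
  graded : ∀ n : ℕ, ∀ c ∈ gr n, Δ c ∈ AddSubgroup.closure
    {z | ∃ (p q : ℕ) (x y : C), p + q = n ∧ x ∈ gr p ∧ y ∈ gr q ∧ z = (x ⊙[R] y)}

/-- A connected graded `R`-coring: the degree-`0` component is identified with `R`
via `η` (with inverse induced by the counit). -/
structure ConnGCoring extends GCoring R where
  η : R →+ C
  η_mem : ∀ r : R, η r ∈ gr 0
  ε_η : ∀ r : R, ε (η r) = r
  η_lsmul : ∀ r s : R, η (r * s) = r • η s
  η_rsmul : ∀ r s : R, η (s * r) = op r • η s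
  proj0 : ∀ c : C, ((DirectSum.decompose gr c 0 : ↥(gr 0)) : C) = η (ε c)
  ε_gr : ∀ n : ℕ, n ≠ 0 → ∀ c ∈ gr n, ε c = 0

end Graded

section Koszul

variable {R : Type} [Ring R]

namespace GRing

variable (A : GRing R)

/-- Graded multiplication into a prescribed component. -/
def gmulC {p q r : ℕ} (h : p + q = r) (x : A.cmp p) (y : A.cmp q) : A.cmp r :=
  ⟨(x : A.A) * (y : A.A), h ▸ A.mul_mem x.2 y.2⟩

theorem gmulC_addl {p q r : ℕ} (h : p + q = r) (x x' : A.cmp p) (y : A.cmp q) :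
    A.gmulC h (x + x') y = A.gmulC h x y + A.gmulC h x' y :=
  Subtype.ext (add_mul _ _ _)

theorem gmulC_addr {p q r : ℕ} (h : p + q = r) (x : A.cmp p) (y y' : A.cmp q) :
    A.gmulC h x (y + y') = A.gmulC h x y + A.gmulC h x y' :=
  Subtype.ext (mul_add _ _ _)

theorem gmulC_lsmull {p q r : ℕ} (h : p + q = r) (s : R) (x : A.cmp p) (y : A.cmp q) :
    A.gmulC h (s • x) y = s • A.gmulC h x y :=
  Subtype.ext (mul_assoc _ _ _)

theorem gmulC_bal {p q r : ℕ} (h : p + q = r) (s : R) (x : A.cmp p) (y : A.cmp q) :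
    A.gmulC h (op s • x) y = A.gmulC h x (s • y) :=
  Subtype.ext (mul_assoc _ _ _)

theorem gmulC_rsmulr {p q r : ℕ} (h : p + q = r) (s : Rᵐᵒᵖ) (x : A.cmp p) (y : A.cmp q) :
    A.gmulC h x (s • y) = s • A.gmulC h x y :=
  Subtype.ext (mul_assoc _ _ _).symm

/-- The unit of a graded ring as an element of the degree-zero component. -/
def one0 : A.cmp 0 := ⟨A.u 1, A.u_mem 1⟩

theorem lsmul_one0_eq_rsmul (r : R) : (r • A.one0 : A.cmp 0) = op r • A.one0 := by
  apply Subtype.ext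
  show A.u r * A.u 1 = A.u 1 * A.u r
  rw [map_one, mul_one, one_mul]

end GRing

namespace PreGCoring

variable (D : PreGCoring R)

theorem proj_lsmul' (r : R) (n : ℕ) (c : D.C) :
    D.proj n (r • c) = r • D.proj n c :=
  Subtype.ext (D.proj_lsmul r n c)

theorem proj_rsmul' (r : Rᵐᵒᵖ) (n : ℕ) (c : D.C) :
    D.proj n (r • c) = r • D.proj n c :=
  Subtype.ext (D.proj_rsmul r n c)

end PreGCoring

/-- `K_l^n(A,C) = C ⊗ A^n`. -/
abbrev Kl (A : ConnGRing R) (C : ConnGCoring R) (n : ℕ) : Type :=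
  PTensor R C.C (A.cmp n)

/-- `K_r^n(A,C) = A^n ⊗ C`. -/
abbrev Kr (A : ConnGRing R) (C : ConnGCoring R) (n : ℕ) : Type :=
  PTensor R (A.cmp n) C.C

/-- The datum of an isomorphism `θ : C¹ ≅ A¹` of `R`-bimodules between the
degree-one components of a connected graded ring and coring. -/
structure KTheta (A : ConnGRing R) (C : ConnGCoring R) where
  θ : C.cmp 1 ≃+ A.cmp 1
  θ_lsmul : ∀ (r : R) (x : C.cmp 1), θ (r • x) = r • θ x
  θ_rsmul : ∀ (r : Rᵐᵒᵖ) (x : C.cmp 1), θ (r • x) = r • θ x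

namespace KTheta

variable {A : ConnGRing R} {C : ConnGCoring R} (t : KTheta A C)

/-- `θ̃ : C → A¹`, the composite of `θ` with the projection onto degree one. -/
def til : C.C →+ A.cmp 1 := t.θ.toAddMonoidHom.comp (C.proj 1)

theorem til_lsmul (r : R) (c : C.C) : t.til (r • c) = r • t.til c := by
  show t.θ (C.proj 1 (r • c)) = r • t.θ (C.proj 1 c)
  rw [C.proj_lsmul', t.θ_lsmul]

theorem til_rsmul (r : Rᵐᵒᵖ) (c : C.C) : t.til (r • c) = r • t.til c := by
  show t.θ (C.proj 1 (r • c)) = r • t.θ (C.proj 1 c)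
  rw [C.proj_rsmul', t.θ_rsmul]

/-- The map `C ⊗ C → A`, `x ⊗ y ↦ θ(x¹)·θ(y¹)`, used in the pre-Koszul condition. -/
def mu : PTensor R C.C C.C →+ A.A :=
  PTensor.lift (fun x y => ((t.til x : A.cmp 1) : A.A) * ((t.til y : A.cmp 1) : A.A))
    (fun x x' y => by (try dsimp only); rw [map_add]; exact add_mul _ _ _)
    (fun x y y' => by (try dsimp only); rw [map_add]; exact mul_add _ _ _)
    (fun r x y => by
      try dsimp only
      rw [t.til_rsmul, t.til_lsmul]
      show ((t.til x : A.A) * A.u r) * _ = _ * (A.u r * (t.til y : A.A))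
      rw [mul_assoc])

/-- The pre-Koszul condition `m¹¹ ∘ (θ ⊗ θ) ∘ Δ¹¹ = 0`. -/
def IsPreKoszul : Prop := ∀ c ∈ C.gr 2, t.mu (C.Δ c) = 0

/-! ### The cochain complex `K_l^•(A, C)` -/

/-- The differential of `K_l^•(A,C)`. -/
def dl (n : ℕ) : Kl A C n →+ Kl A C (n + 1) :=
  PTensor.lift
    (fun c a =>
      (PTensor.lift (fun x y => x ⊙[R] (A.gmulC (Nat.add_comm 1 n) (t.til y) a))
        (fun x x' y => by (try dsimp only); rw [PTensor.add_tmul])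
        (fun x y y' => by (try dsimp only); rw [map_add, GRing.gmulC_addl, PTensor.tmul_add])
        (fun r x y => by
          try dsimp only
          rw [PTensor.balance, t.til_lsmul, GRing.gmulC_lsmull]))
        (C.Δ c))
    (fun c c' a => by (try dsimp only); rw [map_add, map_add])
    (fun c a a' => by
      try dsimp only
      induction C.Δ c using PTensor.ind with
      | h0 => simp
      | htm x y =>
          rw [PTensor.lift_tmul, PTensor.lift_tmul, PTensor.lift_tmul,
            GRing.gmulC_addr, PTensor.tmul_add]
      | hadd z w hz hw => simp only [map_add, hz, hw]; abel)
    (fun r c a => by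
      try dsimp only
      rw [C.Δ_rsmul]
      induction C.Δ c using PTensor.ind with
      | h0 => simp
      | htm x y =>
          rw [PTensor.rsmul_tmul, PTensor.lift_tmul, PTensor.lift_tmul,
            t.til_rsmul, GRing.gmulC_bal]
      | hadd z w hz hw => simp only [smul_add, map_add, hz, hw])

theorem dl_tmul (n : ℕ) (c : C.C) (a : A.cmp n) :
    t.dl n (c ⊙[R] a) =
      (PTensor.lift (fun x y => x ⊙[R] (A.gmulC (Nat.add_comm 1 n) (t.til y) a))
        (fun x x' y => by (try dsimp only); rw [PTensor.add_tmul])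
        (fun x y y' => by (try dsimp only); rw [map_add, GRing.gmulC_addl, PTensor.tmul_add])
        (fun r x y => by
          try dsimp only
          rw [PTensor.balance, t.til_lsmul, GRing.gmulC_lsmull]))
        (C.Δ c) :=
  PTensor.lift_tmul _ _ _ _ c a

theorem dl_lsmul (n : ℕ) (r : R) (w : Kl A C n) : t.dl n (r • w) = r • t.dl n w := by
  induction w using PTensor.ind with
  | h0 => simp
  | htm c a =>
      rw [PTensor.lsmul_tmul, t.dl_tmul, t.dl_tmul, C.Δ_lsmul]
      induction C.Δ c using PTensor.ind with
      | h0 => simp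
      | htm x y =>
          rw [PTensor.lsmul_tmul, PTensor.lift_tmul, PTensor.lift_tmul,
            PTensor.lsmul_tmul]
      | hadd z w hz hw => simp only [smul_add, map_add, hz, hw]
  | hadd z w hz hw => simp only [smul_add, map_add, hz, hw]

theorem dl_rsmul (n : ℕ) (r : Rᵐᵒᵖ) (w : Kl A C n) : t.dl n (r • w) = r • t.dl n w := by
  induction w using PTensor.ind with
  | h0 => simp
  | htm c a =>
      rw [PTensor.rsmul_tmul, t.dl_tmul, t.dl_tmul]
      induction C.Δ c using PTensor.ind with
      | h0 => simp
      | htm x y =>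
          rw [PTensor.lift_tmul, PTensor.lift_tmul, GRing.gmulC_rsmulr, PTensor.rsmul_tmul]
      | hadd z w hz hw => simp only [map_add, hz, hw, smul_add]
  | hadd z w hz hw => simp only [smul_add, map_add, hz, hw]

end KTheta

/-- The augmentation `R → C ⊗ A⁰` of `K_l^•(A,C)`. -/
def auglK (A : ConnGRing R) (C : ConnGCoring R) : R →+ Kl A C 0 :=
  AddMonoidHom.mk' (fun r => (C.η r) ⊙[R] A.one0)
    (fun r s => by (try dsimp only); rw [map_add, PTensor.add_tmul])

namespace KTheta

variable {A : ConnGRing R} {C : ConnGCoring R} (t : KTheta A C)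

/-- Exactness of the augmented complex `K̃_l^•(A,C)`. -/
def KlExact : Prop :=
  Function.Injective (auglK A C) ∧ Function.Exact (auglK A C) (t.dl 0) ∧
    ∀ n, Function.Exact (t.dl n) (t.dl (n + 1))

/-! ### The cochain complex `K_r^•(A, C)` -/

/-- The differential of `K_r^•(A,C)`. -/
def dr (n : ℕ) : Kr A C n →+ Kr A C (n + 1) :=
  PTensor.lift
    (fun a c =>
      (PTensor.lift (fun x y => (A.gmulC (rfl : n + 1 = n + 1) a (t.til x)) ⊙[R] y)
        (fun x x' y => by (try dsimp only); rw [map_add, GRing.gmulC_addr, PTensor.add_tmul])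
        (fun x y y' => by (try dsimp only); rw [PTensor.tmul_add])
        (fun r x y => by
          try dsimp only
          rw [t.til_rsmul, GRing.gmulC_rsmulr, PTensor.balance]))
        (C.Δ c))
    (fun a a' c => by
      try dsimp only
      induction C.Δ c using PTensor.ind with
      | h0 => simp
      | htm x y =>
          rw [PTensor.lift_tmul, PTensor.lift_tmul, PTensor.lift_tmul,
            GRing.gmulC_addl, PTensor.add_tmul]
      | hadd z w hz hw => simp only [map_add, hz, hw]; abel)
    (fun a c c' => by (try dsimp only); rw [map_add, map_add])
    (fun r a c => by
      try dsimp only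
      rw [C.Δ_lsmul]
      induction C.Δ c using PTensor.ind with
      | h0 => simp
      | htm x y =>
          rw [PTensor.lsmul_tmul, PTensor.lift_tmul, PTensor.lift_tmul,
            t.til_lsmul, GRing.gmulC_bal]
      | hadd z w hz hw => simp only [smul_add, map_add, hz, hw])

theorem dr_tmul (n : ℕ) (a : A.cmp n) (c : C.C) :
    t.dr n (a ⊙[R] c) =
      (PTensor.lift (fun x y => (A.gmulC (rfl : n + 1 = n + 1) a (t.til x)) ⊙[R] y)
        (fun x x' y => by (try dsimp only); rw [map_add, GRing.gmulC_addr, PTensor.add_tmul])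
        (fun x y y' => by (try dsimp only); rw [PTensor.tmul_add])
        (fun r x y => by
          try dsimp only
          rw [t.til_rsmul, GRing.gmulC_rsmulr, PTensor.balance]))
        (C.Δ c) :=
  PTensor.lift_tmul _ _ _ _ a c

theorem dr_lsmul (n : ℕ) (r : R) (w : Kr A C n) : t.dr n (r • w) = r • t.dr n w := by
  induction w using PTensor.ind with
  | h0 => simp
  | htm a c =>
      rw [PTensor.lsmul_tmul, t.dr_tmul, t.dr_tmul]
      induction C.Δ c using PTensor.ind with
      | h0 => simp
      | htm x y =>
          rw [PTensor.lift_tmul, PTensor.lift_tmul, GRing.gmulC_lsmull, PTensor.lsmul_tmul]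
      | hadd z w hz hw => simp only [map_add, hz, hw, smul_add]
  | hadd z w hz hw => simp only [smul_add, map_add, hz, hw]

theorem dr_rsmul (n : ℕ) (r : Rᵐᵒᵖ) (w : Kr A C n) : t.dr n (r • w) = r • t.dr n w := by
  induction w using PTensor.ind with
  | h0 => simp
  | htm a c =>
      rw [PTensor.rsmul_tmul, t.dr_tmul, t.dr_tmul, C.Δ_rsmul]
      induction C.Δ c using PTensor.ind with
      | h0 => simp
      | htm x y =>
          rw [PTensor.rsmul_tmul, PTensor.lift_tmul, PTensor.lift_tmul, PTensor.rsmul_tmul]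
      | hadd z w hz hw => simp only [map_add, hz, hw, smul_add]
  | hadd z w hz hw => simp only [smul_add, map_add, hz, hw]

end KTheta

/-- The augmentation `R → A⁰ ⊗ C` of `K_r^•(A,C)`. -/
def augrK (A : ConnGRing R) (C : ConnGCoring R) : R →+ Kr A C 0 :=
  AddMonoidHom.mk' (fun r => A.one0 ⊙[R] (C.η r))
    (fun r s => by (try dsimp only); rw [map_add, PTensor.tmul_add])

namespace KTheta

variable {A : ConnGRing R} {C : ConnGCoring R} (t : KTheta A C)

/-- Exactness of the augmented complex `K̃_r^•(A,C)`. -/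
def KrExact : Prop :=
  Function.Injective (augrK A C) ∧ Function.Exact (augrK A C) (t.dr 0) ∧
    ∀ n, Function.Exact (t.dr n) (t.dr (n + 1))

end KTheta

end Koszul

section Koszul2

variable {R : Type} [Ring R]

namespace GRing

variable (A : GRing R)

instance : SMulCommClass A.A Rᵐᵒᵖ A.A where
  smul_comm a s x := by
    show a * (x * A.u s.unop) = (a * x) * A.u s.unop
    rw [mul_assoc]

end GRing

/-- `K^n(A,C) = (C ⊗ A^n) ⊗ C`. -/
abbrev Kbig (A : ConnGRing R) (C : ConnGCoring R) (n : ℕ) : Type :=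
  PTensor R (Kl A C n) C.C

/-- `K^l_n(A,C) = A ⊗ C^n`. -/
abbrev Gl (A : ConnGRing R) (C : ConnGCoring R) (n : ℕ) : Type :=
  PTensor R A.A (C.cmp n)

/-- `K^r_n(A,C) = C^n ⊗ A`. -/
abbrev Gr (A : ConnGRing R) (C : ConnGCoring R) (n : ℕ) : Type :=
  PTensor R (C.cmp n) A.A

/-- `K_n(A,C) = (A ⊗ C^n) ⊗ A`. -/
abbrev Gbig (A : ConnGRing R) (C : ConnGCoring R) (n : ℕ) : Type :=
  PTensor R (Gl A C n) A.A

namespace KTheta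

variable {A : ConnGRing R} {C : ConnGCoring R} (t : KTheta A C)

/-! ### The complex `K^•(A,C)` of bicomodules -/

/-- Right multiplication by a degree-one element on the `A`-leg of `C ⊗ A^n`. -/
def mulA1 (n : ℕ) (b : A.cmp 1) : Kl A C n →+ Kl A C (n + 1) :=
  PTensor.map (AddMonoidHom.id C.C)
    (AddMonoidHom.mk' (fun a => A.gmulC (rfl : n + 1 = n + 1) a b)
      (fun a a' => A.gmulC_addl (rfl : n + 1 = n + 1) a a' b))
    (fun _ _ => rfl)
    (fun r a => A.gmulC_lsmull (rfl : n + 1 = n + 1) r a b)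

theorem mulA1_tmul (n : ℕ) (b : A.cmp 1) (c : C.C) (a : A.cmp n) :
    mulA1 (A := A) (C := C) n b (c ⊙[R] a) = c ⊙[R] (A.gmulC (rfl : n + 1 = n + 1) a b) :=
  PTensor.map_tmul _ _ _ _ c a

theorem mulA1_addb (n : ℕ) (b b' : A.cmp 1) (w : Kl A C n) :
    mulA1 n (b + b') w = mulA1 (A := A) (C := C) n b w + mulA1 n b' w := by
  induction w using PTensor.ind with
  | h0 => simp
  | htm c a => rw [mulA1_tmul, mulA1_tmul, mulA1_tmul, A.gmulC_addr, PTensor.tmul_add]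
  | hadd z w hz hw => simp only [map_add, hz, hw]; abel

theorem mulA1_rsmulb (n : ℕ) (s : Rᵐᵒᵖ) (b : A.cmp 1) (w : Kl A C n) :
    mulA1 n (s • b) w = s • mulA1 (A := A) (C := C) n b w := by
  induction w using PTensor.ind with
  | h0 => simp
  | htm c a => rw [mulA1_tmul, mulA1_tmul, A.gmulC_rsmulr, PTensor.rsmul_tmul]
  | hadd z w hz hw => simp only [map_add, hz, hw, smul_add]

theorem mulA1_bal (n : ℕ) (r : R) (b : A.cmp 1) (w : Kl A C n) :
    mulA1 n b (op r • w) = mulA1 (A := A) (C := C) n (r • b) w := by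
  induction w using PTensor.ind with
  | h0 => simp
  | htm c a => rw [PTensor.rsmul_tmul, mulA1_tmul, mulA1_tmul, A.gmulC_bal]
  | hadd z w hz hw => simp only [smul_add, map_add, hz, hw]

/-- The second summand `(-1)^{n+1} C ⊗ d_r^n` of the differential of `K^•(A,C)`,
without its sign. -/
def tbig (n : ℕ) : Kbig A C n →+ Kbig A C (n + 1) :=
  PTensor.lift
    (fun w c' =>
      (PTensor.lift (fun x y => (mulA1 n (t.til x) w) ⊙[R] y)
        (fun x x' y => by (try dsimp only); rw [map_add, mulA1_addb, PTensor.add_tmul])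
        (fun x y y' => by (try dsimp only); rw [PTensor.tmul_add])
        (fun s x y => by
          try dsimp only
          rw [t.til_rsmul, mulA1_rsmulb, PTensor.balance]))
        (C.Δ c'))
    (fun w w' c' => by
      try dsimp only
      induction C.Δ c' using PTensor.ind with
      | h0 => simp
      | htm x y =>
          rw [PTensor.lift_tmul, PTensor.lift_tmul, PTensor.lift_tmul, map_add,
            PTensor.add_tmul]
      | hadd z w'' hz hw => rw [map_add, map_add, map_add, hz, hw]; abel)
    (fun w c' c'' => by (try dsimp only); rw [map_add, map_add])
    (fun r w c' => by
      try dsimp only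
      rw [C.Δ_lsmul]
      induction C.Δ c' using PTensor.ind with
      | h0 => simp
      | htm x y =>
          rw [PTensor.lsmul_tmul, PTensor.lift_tmul, PTensor.lift_tmul, mulA1_bal,
            t.til_lsmul]
      | hadd z w'' hz hw => simp only [smul_add, map_add, hz, hw])

/-- The differential of `K^•(A,C)`. -/
def dbig (n : ℕ) : Kbig A C n →+ Kbig A C (n + 1) :=
  AddMonoidHom.mk'
    (fun w =>
      PTensor.map (t.dl n) (AddMonoidHom.id C.C) (fun r w => t.dl_rsmul n (op r) w) (fun _ _ => rfl) w +
        ((-1 : ℤ) ^ (n + 1)) • t.tbig n w)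
    (fun w w' => by
      try dsimp only
      rw [map_add, map_add, smul_add]
      abel)

end KTheta

/-- The augmentation `C → (C ⊗ A⁰) ⊗ C` of `K^•(A,C)`, induced by the
comultiplication. -/
def augbigK (A : ConnGRing R) (C : ConnGCoring R) : C.C →+ Kbig A C 0 :=
  (PTensor.lift (fun x y => (x ⊙[R] A.one0) ⊙[R] y)
    (fun x x' y => by (try dsimp only); rw [PTensor.add_tmul, PTensor.add_tmul])
    (fun x y y' => by (try dsimp only); rw [PTensor.tmul_add])
    (fun r x y => by
      try dsimp only
      rw [PTensor.balance, A.lsmul_one0_eq_rsmul, ← PTensor.rsmul_tmul,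
        PTensor.balance])).comp C.Δ

namespace KTheta

variable {A : ConnGRing R} {C : ConnGCoring R} (t : KTheta A C)

/-- Exactness of the augmented complex `K̃^•(A,C)`. -/
def KbigExact : Prop :=
  Function.Injective (augbigK A C) ∧ Function.Exact (augbigK A C) (t.dbig 0) ∧
    ∀ n, Function.Exact (t.dbig n) (t.dbig (n + 1))

/-! ### The chain complex `K^l_•(A,C)` -/

/-- The differential of `K^l_•(A,C)`. -/
def dGl (n : ℕ) : Gl A C (n + 1) →+ Gl A C n :=
  PTensor.lift
    (fun a c =>
      (PTensor.lift
        (fun x y => (a * ((t.til x : A.cmp 1) : A.A)) ⊙[R] (C.proj n y))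
        (fun x x' y => by
          try dsimp only
          rw [map_add]
          show (a * (((t.til x : A.cmp 1) : A.A) + ((t.til x' : A.cmp 1) : A.A))) ⊙[R] _ = _
          rw [mul_add, PTensor.add_tmul])
        (fun x y y' => by (try dsimp only); rw [map_add, PTensor.tmul_add])
        (fun s x y => by
          try dsimp only
          rw [t.til_rsmul, C.proj_lsmul']
          show (a * (((t.til x : A.cmp 1) : A.A) * A.u s)) ⊙[R] _ = _
          rw [← mul_assoc]
          rw [show a * ((t.til x : A.cmp 1) : A.A) * A.u s
              = op s • (a * ((t.til x : A.cmp 1) : A.A)) from rfl]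
          rw [PTensor.balance]))
        (C.Δ (c : C.C)))
    (fun a a' c => by
      try dsimp only
      induction C.Δ (c : C.C) using PTensor.ind with
      | h0 => simp
      | htm x y =>
          rw [PTensor.lift_tmul, PTensor.lift_tmul, PTensor.lift_tmul, add_mul,
            PTensor.add_tmul]
      | hadd z w hz hw => simp only [map_add, hz, hw]; abel)
    (fun a c c' => by
      try dsimp only
      rw [show ((c + c' : C.cmp (n + 1)) : C.C) = (c : C.C) + (c' : C.C) from rfl,
        map_add, map_add])
    (fun r a c => by
      try dsimp only
      rw [show ((r • c : C.cmp (n + 1)) : C.C) = r • (c : C.C) from rfl, C.Δ_lsmul]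
      induction C.Δ (c : C.C) using PTensor.ind with
      | h0 => simp
      | htm x y =>
          rw [PTensor.lsmul_tmul, PTensor.lift_tmul, PTensor.lift_tmul, t.til_lsmul]
          show ((a * A.u r) * ((t.til x : A.cmp 1) : A.A)) ⊙[R] _
            = (a * (A.u r * ((t.til x : A.cmp 1) : A.A))) ⊙[R] _
          rw [mul_assoc]
      | hadd z w hz hw => simp only [smul_add, map_add, hz, hw])

theorem dGl_tmul (n : ℕ) (a : A.A) (c : C.cmp (n + 1)) :
    t.dGl n (a ⊙[R] c) =
      (PTensor.lift
        (fun x y => (a * ((t.til x : A.cmp 1) : A.A)) ⊙[R] (C.proj n y))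
        (fun x x' y => by
          try dsimp only
          rw [map_add]
          show (a * (((t.til x : A.cmp 1) : A.A) + ((t.til x' : A.cmp 1) : A.A))) ⊙[R] _ = _
          rw [mul_add, PTensor.add_tmul])
        (fun x y y' => by (try dsimp only); rw [map_add, PTensor.tmul_add])
        (fun s x y => by
          try dsimp only
          rw [t.til_rsmul, C.proj_lsmul']
          show (a * (((t.til x : A.cmp 1) : A.A) * A.u s)) ⊙[R] _ = _
          rw [← mul_assoc]
          rw [show a * ((t.til x : A.cmp 1) : A.A) * A.u s
              = op s • (a * ((t.til x : A.cmp 1) : A.A)) from rfl]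
          rw [PTensor.balance]))
        (C.Δ (c : C.C)) :=
  PTensor.lift_tmul _ _ _ _ a c

theorem dGl_rsmul (n : ℕ) (r : Rᵐᵒᵖ) (w : Gl A C (n + 1)) :
    t.dGl n (r • w) = r • t.dGl n w := by
  induction w using PTensor.ind with
  | h0 => simp
  | htm a c =>
      rw [PTensor.rsmul_tmul, t.dGl_tmul, t.dGl_tmul,
        show ((r • c : C.cmp (n + 1)) : C.C) = r • (c : C.C) from rfl, C.Δ_rsmul]
      induction C.Δ (c : C.C) using PTensor.ind with
      | h0 => simp
      | htm x y =>
          rw [PTensor.rsmul_tmul, PTensor.lift_tmul, PTensor.lift_tmul,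
            C.proj_rsmul', PTensor.rsmul_tmul]
      | hadd z w hz hw => simp only [map_add, hz, hw, smul_add]
  | hadd z w hz hw => simp only [smul_add, map_add, hz, hw]

theorem dGl_lsmulA (n : ℕ) (b : A.A) (w : Gl A C (n + 1)) :
    t.dGl n (b • w) = b • t.dGl n w := by
  induction w using PTensor.ind with
  | h0 => simp
  | htm a c =>
      rw [PTensor.lsmul_tmul, t.dGl_tmul, t.dGl_tmul]
      induction C.Δ (c : C.C) using PTensor.ind with
      | h0 => simp
      | htm x y =>
          rw [PTensor.lift_tmul, PTensor.lift_tmul, PTensor.lsmul_tmul]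
          show ((b * a) * ((t.til x : A.cmp 1) : A.A)) ⊙[R] _
            = (b * (a * ((t.til x : A.cmp 1) : A.A))) ⊙[R] _
          rw [mul_assoc]
      | hadd z w hz hw => simp only [map_add, hz, hw, smul_add]
  | hadd z w hz hw => simp only [smul_add, map_add, hz, hw]

end KTheta

/-- The coaugmentation `A ⊗ C⁰ → R` of `K^l_•(A,C)`. -/
def caugGl (A : ConnGRing R) (C : ConnGCoring R) : Gl A C 0 →+ R :=
  PTensor.lift (fun a c => A.v a * C.ε (c : C.C))
    (fun a a' c => by (try dsimp only); rw [map_add, add_mul])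
    (fun a c c' => by
      try dsimp only
      rw [show ((c + c' : C.cmp 0) : C.C) = (c : C.C) + (c' : C.C) from rfl, map_add,
        mul_add])
    (fun r a c => by
      try dsimp only
      rw [A.v_rsmul, show ((r • c : C.cmp 0) : C.C) = r • (c : C.C) from rfl,
        C.ε_lsmul, mul_assoc])

namespace KTheta

variable {A : ConnGRing R} {C : ConnGCoring R} (t : KTheta A C)

/-- Exactness of the coaugmented complex `K̃^l_•(A,C)`. -/
def GlExact : Prop :=
  Function.Surjective (caugGl A C) ∧ Function.Exact (t.dGl 0) (caugGl A C) ∧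
    ∀ n, Function.Exact (t.dGl (n + 1)) (t.dGl n)

/-! ### The chain complex `K^r_•(A,C)` -/

/-- The differential of `K^r_•(A,C)`. -/
def dGr (n : ℕ) : Gr A C (n + 1) →+ Gr A C n :=
  PTensor.lift
    (fun c a =>
      (PTensor.lift
        (fun x y => (C.proj n x) ⊙[R] (((t.til y : A.cmp 1) : A.A) * a))
        (fun x x' y => by (try dsimp only); rw [map_add, PTensor.add_tmul])
        (fun x y y' => by
          try dsimp only
          rw [map_add]
          show _ = _ ⊙[R] (((t.til y : A.cmp 1) : A.A) * a)
            + _ ⊙[R] (((t.til y' : A.cmp 1) : A.A) * a)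
          rw [show (((t.til y + t.til y' : A.cmp 1) : A.A)) =
              ((t.til y : A.cmp 1) : A.A) + ((t.til y' : A.cmp 1) : A.A) from rfl,
            add_mul, PTensor.tmul_add])
        (fun s x y => by
          try dsimp only
          rw [C.proj_rsmul', PTensor.balance, t.til_lsmul]
          show (C.proj n x) ⊙[R] (A.u s * (((t.til y : A.cmp 1) : A.A) * a))
            = (C.proj n x) ⊙[R] ((A.u s * ((t.til y : A.cmp 1) : A.A)) * a)
          rw [← mul_assoc]))
        (C.Δ (c : C.C)))
    (fun c c' a => by
      try dsimp only
      rw [show ((c + c' : C.cmp (n + 1)) : C.C) = (c : C.C) + (c' : C.C) from rfl,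
        map_add, map_add])
    (fun c a a' => by
      try dsimp only
      induction C.Δ (c : C.C) using PTensor.ind with
      | h0 => simp
      | htm x y =>
          rw [PTensor.lift_tmul, PTensor.lift_tmul, PTensor.lift_tmul, mul_add,
            PTensor.tmul_add]
      | hadd z w hz hw => simp only [map_add, hz, hw]; abel)
    (fun r c a => by
      try dsimp only
      rw [show ((op r • c : C.cmp (n + 1)) : C.C) = op r • (c : C.C) from rfl, C.Δ_rsmul]
      induction C.Δ (c : C.C) using PTensor.ind with
      | h0 => simp
      | htm x y =>
          rw [PTensor.rsmul_tmul, PTensor.lift_tmul, PTensor.lift_tmul, t.til_rsmul]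
          show _ ⊙[R] ((((t.til y : A.cmp 1) : A.A) * A.u r) * a)
            = _ ⊙[R] (((t.til y : A.cmp 1) : A.A) * (A.u r * a))
          rw [mul_assoc]
      | hadd z w hz hw => simp only [smul_add, map_add, hz, hw])

end KTheta

/-- The coaugmentation `C⁰ ⊗ A → R` of `K^r_•(A,C)`. -/
def caugGr (A : ConnGRing R) (C : ConnGCoring R) : Gr A C 0 →+ R :=
  PTensor.lift (fun c a => C.ε (c : C.C) * A.v a)
    (fun c c' a => by
      try dsimp only
      rw [show ((c + c' : C.cmp 0) : C.C) = (c : C.C) + (c' : C.C) from rfl, map_add,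
        add_mul])
    (fun c a a' => by (try dsimp only); rw [map_add, mul_add])
    (fun r c a => by
      try dsimp only
      rw [show ((op r • c : C.cmp 0) : C.C) = op r • (c : C.C) from rfl, C.ε_rsmul,
        A.v_lsmul, mul_assoc])

namespace KTheta

variable {A : ConnGRing R} {C : ConnGCoring R} (t : KTheta A C)

/-- Exactness of the coaugmented complex `K̃^r_•(A,C)`. -/
def GrExact : Prop :=
  Function.Surjective (caugGr A C) ∧ Function.Exact (t.dGr 0) (caugGr A C) ∧
    ∀ n, Function.Exact (t.dGr (n + 1)) (t.dGr n)

/-! ### The chain complex `K_•(A,C)` of bimodules -/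

/-- The innermost piece of the second summand of the differential of `K_•(A,C)`. -/
def sInner (n : ℕ) (a b : A.A) : PTensor R C.C C.C →+ Gbig A C n :=
  PTensor.lift
    (fun x y => (a ⊙[R] C.proj n x) ⊙[R] (((t.til y : A.cmp 1) : A.A) * b))
    (fun x x' y => by (try dsimp only); rw [map_add, PTensor.tmul_add, PTensor.add_tmul])
    (fun x y y' => by
      try dsimp only
      rw [map_add]
      rw [show (((t.til y + t.til y' : A.cmp 1) : A.A)) =
          ((t.til y : A.cmp 1) : A.A) + ((t.til y' : A.cmp 1) : A.A) from rfl,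
        add_mul, PTensor.tmul_add])
    (fun s x y => by
      try dsimp only
      rw [C.proj_rsmul', ← PTensor.rsmul_tmul, PTensor.balance, t.til_lsmul]
      show (a ⊙[R] C.proj n x) ⊙[R] (A.u s * (((t.til y : A.cmp 1) : A.A) * b))
        = (a ⊙[R] C.proj n x) ⊙[R] ((A.u s * ((t.til y : A.cmp 1) : A.A)) * b)
      rw [← mul_assoc])

theorem sInner_tmul (n : ℕ) (a b : A.A) (x y : C.C) :
    t.sInner n a b (x ⊙[R] y) =
      (a ⊙[R] C.proj n x) ⊙[R] (((t.til y : A.cmp 1) : A.A) * b) :=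
  PTensor.lift_tmul _ _ _ _ x y

/-- The middle piece of the second summand of the differential of `K_•(A,C)`. -/
def sMid (n : ℕ) (b : A.A) : Gl A C (n + 1) →+ Gbig A C n :=
  PTensor.lift (fun a c => t.sInner n a b (C.Δ (c : C.C)))
    (fun a a' c => by
      try dsimp only
      induction C.Δ (c : C.C) using PTensor.ind with
      | h0 => simp
      | htm x y =>
          simp only [sInner_tmul]
          rw [PTensor.add_tmul, PTensor.add_tmul]
      | hadd z w hz hw => rw [map_add, map_add, map_add, hz, hw]; abel)
    (fun a c c' => by
      try dsimp only
      rw [show ((c + c' : C.cmp (n + 1)) : C.C) = (c : C.C) + (c' : C.C) from rfl,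
        map_add, map_add])
    (fun r a c => by
      try dsimp only
      rw [show ((r • c : C.cmp (n + 1)) : C.C) = r • (c : C.C) from rfl, C.Δ_lsmul]
      induction C.Δ (c : C.C) using PTensor.ind with
      | h0 => simp
      | htm x y =>
          rw [PTensor.lsmul_tmul]
          simp only [sInner_tmul]
          rw [C.proj_lsmul', ← PTensor.balance]
      | hadd z w hz hw => rw [map_add, smul_add, map_add, hz, hw])

theorem sMid_tmul (n : ℕ) (b : A.A) (a : A.A) (c : C.cmp (n + 1)) :
    t.sMid n b (a ⊙[R] c) = t.sInner n a b (C.Δ (c : C.C)) :=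
  PTensor.lift_tmul _ _ _ _ a c

/-- The second summand `A ⊗ d^r_n` of the differential of `K_•(A,C)`, without sign. -/
def sbig (n : ℕ) : Gbig A C (n + 1) →+ Gbig A C n :=
  PTensor.lift (fun w b => t.sMid n b w)
    (fun w w' b => by (try dsimp only); rw [map_add])
    (fun w b b' => by
      try dsimp only
      induction w using PTensor.ind with
      | h0 => simp
      | htm a c =>
          rw [t.sMid_tmul, t.sMid_tmul, t.sMid_tmul]
          induction C.Δ (c : C.C) using PTensor.ind with
          | h0 => simp
          | htm x y =>
              simp only [sInner_tmul]
              rw [mul_add, PTensor.tmul_add]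
          | hadd z w'' hz hw => rw [map_add, map_add, map_add, hz, hw]; abel
      | hadd z w'' hz hw => rw [map_add, map_add, map_add, hz, hw]; abel)
    (fun r w b => by
      try dsimp only
      induction w using PTensor.ind with
      | h0 => simp
      | htm a c =>
          rw [PTensor.rsmul_tmul, t.sMid_tmul, t.sMid_tmul,
            show ((op r • c : C.cmp (n + 1)) : C.C) = op r • (c : C.C) from rfl,
            C.Δ_rsmul]
          induction C.Δ (c : C.C) using PTensor.ind with
          | h0 => simp
          | htm x y =>
              rw [PTensor.rsmul_tmul]
              simp only [sInner_tmul]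
              rw [t.til_rsmul]
              show (a ⊙[R] C.proj n x) ⊙[R] ((((t.til y : A.cmp 1) : A.A) * A.u r) * b)
                = (a ⊙[R] C.proj n x) ⊙[R] (((t.til y : A.cmp 1) : A.A) * (A.u r * b))
              rw [mul_assoc]
          | hadd z w'' hz hw => rw [map_add, smul_add, map_add, hz, hw]
      | hadd z w'' hz hw => rw [smul_add, map_add, map_add, hz, hw])

/-- The differential of `K_•(A,C)`. -/
def dGbig (n : ℕ) : Gbig A C (n + 1) →+ Gbig A C n :=
  AddMonoidHom.mk'
    (fun w =>
      PTensor.map (t.dGl n) (AddMonoidHom.id A.A) (fun r w => t.dGl_rsmul n (op r) w) (fun _ _ => rfl) w +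
        ((-1 : ℤ) ^ (n + 1)) • t.sbig n w)
    (fun w w' => by
      try dsimp only
      rw [map_add, map_add, smul_add]
      abel)

end KTheta

/-- The coaugmentation `(A ⊗ C⁰) ⊗ A → A` of `K_•(A,C)`, given by multiplication. -/
def caugGbig (A : ConnGRing R) (C : ConnGCoring R) : Gbig A C 0 →+ A.A :=
  PTensor.lift
    (fun w b =>
      (PTensor.lift (fun (a : A.A) (c : C.cmp 0) => a * A.u (C.ε (c : C.C)))
        (fun a a' c => by (try dsimp only); rw [add_mul])
        (fun a c c' => by
          try dsimp only
          rw [show ((c + c' : C.cmp 0) : C.C) = (c : C.C) + (c' : C.C) from rfl,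
            map_add, map_add, mul_add])
        (fun r a c => by
          try dsimp only
          rw [show ((r • c : C.cmp 0) : C.C) = r • (c : C.C) from rfl, C.ε_lsmul,
            map_mul]
          show (a * A.u r) * _ = _
          rw [mul_assoc])) w * b)
    (fun w w' b => by (try dsimp only); rw [map_add, add_mul])
    (fun w b b' => by (try dsimp only); rw [mul_add])
    (fun r w b => by
      try dsimp only
      induction w using PTensor.ind with
      | h0 => simp
      | htm a c =>
          rw [PTensor.rsmul_tmul, PTensor.lift_tmul, PTensor.lift_tmul,
            show ((op r • c : C.cmp 0) : C.C) = op r • (c : C.C) from rfl, C.ε_rsmul,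
            map_mul, ← mul_assoc]
          show _ = (a * A.u (C.ε (c : C.C))) * (A.u r * b)
          rw [← mul_assoc]
      | hadd z w'' hz hw =>
          rw [smul_add, map_add, add_mul, hz, hw, map_add, add_mul])

namespace KTheta

variable {A : ConnGRing R} {C : ConnGCoring R} (t : KTheta A C)

/-- Exactness of the coaugmented complex `K̃_•(A,C)`. -/
def GbigExact : Prop :=
  Function.Surjective (caugGbig A C) ∧ Function.Exact (t.dGbig 0) (caugGbig A C) ∧
    ∀ n, Function.Exact (t.dGbig (n + 1)) (t.dGbig n)

/-- A pre-Koszul pair `(A, C)` is Koszul when all six (co)augmented complexes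
are exact. -/
def IsKoszul : Prop :=
  t.IsPreKoszul ∧ t.KlExact ∧ t.KrExact ∧ t.KbigExact ∧ t.GlExact ∧ t.GrExact ∧
    t.GbigExact

end KTheta

section Coactions

variable {A : ConnGRing R} {C : ConnGCoring R}

/-! ### coactions on `K_l` and `K_r` -/

/-- The left `C`-coaction on `K_l^n(A,C) = C ⊗ A^n`. -/
def rhoLK (A : ConnGRing R) (C : ConnGCoring R) (n : ℕ) :
    Kl A C n →+ PTensor R C.C (Kl A C n) :=
  PTensor.lift
    (fun c a =>
      (PTensor.lift (fun x y => x ⊙[R] (y ⊙[R] a))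
        (fun x x' y => by (try dsimp only); rw [PTensor.add_tmul])
        (fun x y y' => by (try dsimp only); rw [PTensor.add_tmul, PTensor.tmul_add])
        (fun s x y => by (try dsimp only); rw [PTensor.balance, PTensor.lsmul_tmul]))
        (C.Δ c))
    (fun c c' a => by (try dsimp only); rw [map_add, map_add])
    (fun c a a' => by
      try dsimp only
      induction C.Δ c using PTensor.ind with
      | h0 => simp
      | htm x y =>
          rw [PTensor.lift_tmul, PTensor.lift_tmul, PTensor.lift_tmul,
            PTensor.tmul_add, PTensor.tmul_add]
      | hadd z w hz hw => simp only [map_add, hz, hw]; abel)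
    (fun r c a => by
      try dsimp only
      rw [C.Δ_rsmul]
      induction C.Δ c using PTensor.ind with
      | h0 => simp
      | htm x y =>
          rw [PTensor.rsmul_tmul, PTensor.lift_tmul, PTensor.lift_tmul,
            PTensor.balance]
      | hadd z w hz hw => simp only [smul_add, map_add, hz, hw])

/-- The right `C`-coaction on `K_r^n(A,C) = A^n ⊗ C`. -/
def rhoRK (A : ConnGRing R) (C : ConnGCoring R) (n : ℕ) :
    Kr A C n →+ PTensor R (Kr A C n) C.C :=
  PTensor.lift
    (fun a c =>
      (PTensor.lift (fun x y => (a ⊙[R] x) ⊙[R] y)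
        (fun x x' y => by (try dsimp only); rw [PTensor.tmul_add, PTensor.add_tmul])
        (fun x y y' => by (try dsimp only); rw [PTensor.tmul_add])
        (fun s x y => by (try dsimp only); rw [← PTensor.rsmul_tmul, PTensor.balance]))
        (C.Δ c))
    (fun a a' c => by
      try dsimp only
      induction C.Δ c using PTensor.ind with
      | h0 => simp
      | htm x y =>
          rw [PTensor.lift_tmul, PTensor.lift_tmul, PTensor.lift_tmul,
            PTensor.add_tmul, PTensor.add_tmul]
      | hadd z w hz hw => simp only [map_add, hz, hw]; abel)
    (fun a c c' => by (try dsimp only); rw [map_add, map_add])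
    (fun r a c => by
      try dsimp only
      rw [C.Δ_lsmul]
      induction C.Δ c using PTensor.ind with
      | h0 => simp
      | htm x y =>
          rw [PTensor.lsmul_tmul, PTensor.lift_tmul, PTensor.lift_tmul,
            PTensor.balance]
      | hadd z w hz hw => simp only [smul_add, map_add, hz, hw])

end Coactions

/-- The degree-`(p+n)` graded piece `C^p ⊗ A^n` of `K_l^n(A,C)`. -/
def KlPiece (A : ConnGRing R) (C : ConnGCoring R) (p n : ℕ) : AddSubgroup (Kl A C n) :=
  AddSubgroup.closure {z | ∃ c ∈ C.gr p, ∃ a : A.cmp n, z = c ⊙[R] a}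

/-- The degree-`(p+n)` graded piece `A^n ⊗ C^p` of `K_r^n(A,C)`. -/
def KrPiece (A : ConnGRing R) (C : ConnGCoring R) (p n : ℕ) : AddSubgroup (Kr A C n) :=
  AddSubgroup.closure {z | ∃ c ∈ C.gr p, ∃ a : A.cmp n, z = a ⊙[R] c}

end Koszul2

section Comod

variable {R : Type} [Ring R]

namespace ConnGCoring

variable (C : ConnGCoring R)

/-- `x ⊗ c ↦ x·ε(c)`, for any right `R`-module `X`. -/
def counitRHom (X : Type) [AddCommGroup X] [Module Rᵐᵒᵖ X] :
    PTensor R X C.C →+ X :=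
  PTensor.lift (fun x c => op (C.ε c) • x)
    (fun x x' c => by (try dsimp only); rw [smul_add])
    (fun x c c' => by (try dsimp only); rw [map_add, op_add, add_smul])
    (fun r x c => by
      try dsimp only
      rw [C.ε_lsmul, op_mul, mul_smul])

/-- `id_X ⊗ Δ : X ⊗ C → X ⊗ (C ⊗ C)`. -/
def coassocLHom (X : Type) [AddCommGroup X] [Module Rᵐᵒᵖ X] :
    PTensor R X C.C →+ PTensor R X (PTensor R C.C C.C) :=
  PTensor.map (AddMonoidHom.id X) C.Δ (fun _ _ => rfl) C.Δ_lsmul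

/-- `(ρ ⊗ id_C)` composed with the associator, for a right coaction `ρ` on `X`. -/
def rhoExt (X : Type) [AddCommGroup X] [Module Rᵐᵒᵖ X]
    (ρ : X →+ PTensor R X C.C)
    (hρ : ∀ (r : Rᵐᵒᵖ) (x : X), ρ (r • x) = r • ρ x) :
    PTensor R X C.C →+ PTensor R X (PTensor R C.C C.C) :=
  PTensor.lift
    (fun x c =>
      (PTensor.lift (fun x' c' => x' ⊙[R] (c' ⊙[R] c))
        (fun a a' b => by (try dsimp only); rw [PTensor.add_tmul])
        (fun a b b' => by (try dsimp only); rw [PTensor.add_tmul, PTensor.tmul_add])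
        (fun s a b => by (try dsimp only); rw [PTensor.balance, PTensor.lsmul_tmul]))
        (ρ x))
    (fun x x' c => by (try dsimp only); rw [map_add, map_add])
    (fun x c c' => by
      try dsimp only
      induction ρ x using PTensor.ind with
      | h0 => simp
      | htm a b =>
          rw [PTensor.lift_tmul, PTensor.lift_tmul, PTensor.lift_tmul,
            PTensor.tmul_add, PTensor.tmul_add]
      | hadd z w hz hw => rw [map_add, map_add, map_add, hz, hw]; abel)
    (fun r x c => by
      try dsimp only
      rw [hρ]
      induction ρ x using PTensor.ind with
      | h0 => simp
      | htm a b =>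
          rw [PTensor.rsmul_tmul, PTensor.lift_tmul, PTensor.lift_tmul,
            PTensor.balance]
      | hadd z w hz hw => rw [smul_add, map_add, map_add, hz, hw])

/-- The canonical right coaction on `V ⊗ C`, for `V` a right `R`-module. -/
def coactFree (V : Type) [AddCommGroup V] [Module Rᵐᵒᵖ V] :
    PTensor R V C.C →+ PTensor R (PTensor R V C.C) C.C :=
  PTensor.lift
    (fun v c =>
      (PTensor.lift (fun x y => (v ⊙[R] x) ⊙[R] y)
        (fun x x' y => by (try dsimp only); rw [PTensor.tmul_add, PTensor.add_tmul])
        (fun x y y' => by (try dsimp only); rw [PTensor.tmul_add])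
        (fun s x y => by (try dsimp only); rw [← PTensor.rsmul_tmul, PTensor.balance]))
        (C.Δ c))
    (fun v v' c => by
      try dsimp only
      induction C.Δ c using PTensor.ind with
      | h0 => simp
      | htm x y =>
          rw [PTensor.lift_tmul, PTensor.lift_tmul, PTensor.lift_tmul,
            PTensor.add_tmul, PTensor.add_tmul]
      | hadd z w hz hw => rw [map_add, map_add, map_add, hz, hw]; abel)
    (fun v c c' => by (try dsimp only); rw [map_add, map_add])
    (fun r v c => by
      try dsimp only
      rw [C.Δ_lsmul]
      induction C.Δ c using PTensor.ind with
      | h0 => simp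
      | htm x y =>
          rw [PTensor.lsmul_tmul, PTensor.lift_tmul, PTensor.lift_tmul,
            PTensor.balance]
      | hadd z w hz hw => rw [smul_add, map_add, map_add, hz, hw])

theorem coactFree_rsmul (V : Type) [AddCommGroup V] [Module Rᵐᵒᵖ V] (r : Rᵐᵒᵖ)
    (w : PTensor R V C.C) :
    C.coactFree V (r • w) = r • C.coactFree V w := by
  induction w using PTensor.ind with
  | h0 => simp
  | htm v c =>
      rw [PTensor.rsmul_tmul]
      rw [show C.coactFree V (v ⊙[R] (r • c)) = _ from PTensor.lift_tmul _ _ _ _ v (r • c),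
        show C.coactFree V (v ⊙[R] c) = _ from PTensor.lift_tmul _ _ _ _ v c, C.Δ_rsmul]
      induction C.Δ c using PTensor.ind with
      | h0 => simp
      | htm x y =>
          rw [PTensor.rsmul_tmul, PTensor.lift_tmul, PTensor.lift_tmul,
            PTensor.rsmul_tmul]
      | hadd z w hz hw => rw [smul_add, map_add, map_add, hz, hw, smul_add]
  | hadd z w hz hw => rw [smul_add, map_add, hz, hw, map_add, smul_add]

/-- The canonical left coaction on `C ⊗ W`, for `W` a left `R`-module. -/
def coactFreeL (W : Type) [AddCommGroup W] [Module R W] :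
    PTensor R C.C W →+ PTensor R C.C (PTensor R C.C W) :=
  PTensor.lift
    (fun c w =>
      (PTensor.lift (fun x y => x ⊙[R] (y ⊙[R] w))
        (fun x x' y => by (try dsimp only); rw [PTensor.add_tmul])
        (fun x y y' => by (try dsimp only); rw [PTensor.add_tmul, PTensor.tmul_add])
        (fun s x y => by (try dsimp only); rw [PTensor.balance, PTensor.lsmul_tmul]))
        (C.Δ c))
    (fun c c' w => by (try dsimp only); rw [map_add, map_add])
    (fun c w w' => by
      try dsimp only
      induction C.Δ c using PTensor.ind with
      | h0 => simp
      | htm x y =>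
          rw [PTensor.lift_tmul, PTensor.lift_tmul, PTensor.lift_tmul,
            PTensor.tmul_add, PTensor.tmul_add]
      | hadd z w'' hz hw => rw [map_add, map_add, map_add, hz, hw]; abel)
    (fun r c w => by
      try dsimp only
      rw [C.Δ_rsmul]
      induction C.Δ c using PTensor.ind with
      | h0 => simp
      | htm x y =>
          rw [PTensor.rsmul_tmul, PTensor.lift_tmul, PTensor.lift_tmul,
            PTensor.balance]
      | hadd z w'' hz hw => rw [smul_add, map_add, map_add, hz, hw])

theorem coactFreeL_lsmul (W : Type) [AddCommGroup W] [Module R W] (r : R)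
    (w : PTensor R C.C W) :
    C.coactFreeL W (r • w) = r • C.coactFreeL W w := by
  induction w using PTensor.ind with
  | h0 => simp
  | htm c x =>
      rw [PTensor.lsmul_tmul]
      rw [show C.coactFreeL W ((r • c) ⊙[R] x) = _ from
          PTensor.lift_tmul _ _ _ _ (r • c) x,
        show C.coactFreeL W (c ⊙[R] x) = _ from PTensor.lift_tmul _ _ _ _ c x,
        C.Δ_lsmul]
      induction C.Δ c using PTensor.ind with
      | h0 => simp
      | htm x' y =>
          rw [PTensor.lsmul_tmul, PTensor.lift_tmul, PTensor.lift_tmul,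
            PTensor.lsmul_tmul]
      | hadd z w hz hw => rw [smul_add, map_add, map_add, hz, hw, smul_add]
  | hadd z w hz hw => rw [smul_add, map_add, hz, hw, map_add, smul_add]

end ConnGCoring

/-- A right `C`-comodule. -/
structure RCom (R : Type) [Ring R] (C : ConnGCoring R) where
  M : Type
  [acg : AddCommGroup M]
  [modR : Module Rᵐᵒᵖ M]
  ρ : M →+ PTensor R M C.C
  ρ_rsmul : ∀ (r : Rᵐᵒᵖ) (m : M), ρ (r • m) = r • ρ m
  counit : ∀ m : M, C.counitRHom M (ρ m) = m
  coassoc : ∀ m : M, C.coassocLHom M (ρ m) = C.rhoExt M ρ ρ_rsmul (ρ m)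

attribute [instance] RCom.acg RCom.modR

/-- A morphism of right `C`-comodules. -/
structure RComHom {R : Type} [Ring R] {C : ConnGCoring R} (X Y : RCom R C) where
  f : X.M →+ Y.M
  f_rsmul : ∀ (r : Rᵐᵒᵖ) (m : X.M), f (r • m) = r • f m
  colinear : ∀ m : X.M,
    Y.ρ (f m) = PTensor.map f (AddMonoidHom.id C.C)
      (fun r m => f_rsmul (op r) m) (fun _ _ => rfl) (X.ρ m)

/-- An injective object in the category of right `C`-comodules. -/
def IsInjComod {C : ConnGCoring R} (I : RCom R C) : Prop :=
  ∀ (X Y : RCom R C) (ι : RComHom X Y), Function.Injective ι.f →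
    ∀ g : RComHom X I, ∃ h : RComHom Y I, ∀ x, h.f (ι.f x) = g.f x

/-- A left `C`-comodule. -/
structure LCom (R : Type) [Ring R] (C : ConnGCoring R) where
  M : Type
  [acg : AddCommGroup M]
  [modL : Module R M]
  ρ : M →+ PTensor R C.C M
  ρ_lsmul : ∀ (r : R) (m : M), ρ (r • m) = r • ρ m
  counit : ∀ m : M,
    (PTensor.lift (fun c m' => C.ε c • m')
      (fun c c' m' => by (try dsimp only); rw [map_add, add_smul])
      (fun c m' m'' => by (try dsimp only); rw [smul_add])
      (fun r c m' => by (try dsimp only); rw [C.ε_rsmul, mul_smul]) : _) (ρ m) = m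
  coassoc : ∀ m : M,
    (PTensor.lift (fun c m' =>
        (PTensor.lift (fun x y => x ⊙[R] (y ⊙[R] m'))
          (fun x x' y => by (try dsimp only); rw [PTensor.add_tmul])
          (fun x y y' => by (try dsimp only); rw [PTensor.add_tmul, PTensor.tmul_add])
          (fun s x y => by (try dsimp only); rw [PTensor.balance, PTensor.lsmul_tmul]))
          (C.Δ c))
      (fun c c' m' => by (try dsimp only); rw [map_add, map_add])
      (fun c m' m'' => by
        try dsimp only
        induction C.Δ c using PTensor.ind with
        | h0 => simp
        | htm x y =>
            rw [PTensor.lift_tmul, PTensor.lift_tmul, PTensor.lift_tmul,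
              PTensor.tmul_add, PTensor.tmul_add]
        | hadd z w hz hw => rw [map_add, map_add, map_add, hz, hw]; abel)
      (fun r c m' => by
        try dsimp only
        rw [C.Δ_rsmul]
        induction C.Δ c using PTensor.ind with
        | h0 => simp
        | htm x y =>
            rw [PTensor.rsmul_tmul, PTensor.lift_tmul, PTensor.lift_tmul,
              PTensor.balance]
        | hadd z w hz hw => rw [smul_add, map_add, map_add, hz, hw]) : _) (ρ m)
    = PTensor.map (AddMonoidHom.id C.C) ρ (fun _ _ => rfl) ρ_lsmul (ρ m)

attribute [instance] LCom.acg LCom.modL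

/-- A morphism of left `C`-comodules. -/
structure LComHom {R : Type} [Ring R] {C : ConnGCoring R} (X Y : LCom R C) where
  f : X.M →+ Y.M
  f_lsmul : ∀ (r : R) (m : X.M), f (r • m) = r • f m
  colinear : ∀ m : X.M,
    Y.ρ (f m) = PTensor.map (AddMonoidHom.id C.C) f (fun _ _ => rfl) f_lsmul (X.ρ m)

/-- An injective object in the category of left `C`-comodules. -/
def IsInjLComod {C : ConnGCoring R} (I : LCom R C) : Prop :=
  ∀ (X Y : LCom R C) (ι : LComHom X Y), Function.Injective ι.f →
    ∀ g : LComHom X I, ∃ h : LComHom Y I, ∀ x, h.f (ι.f x) = g.f x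

end Comod

section Isos

variable {R : Type} [Ring R]

/-- An isomorphism of connected graded `R`-rings. -/
structure GRingIso (A B : ConnGRing R) where
  e : A.A ≃+* B.A
  e_u : ∀ r : R, e (A.u r) = B.u r
  e_gr : ∀ (n : ℕ) (a : A.A), a ∈ A.gr n ↔ e a ∈ B.gr n

/-- An isomorphism of connected graded `R`-corings. -/
structure GCoringIso (C D : ConnGCoring R) where
  e : C.C ≃+ D.C
  e_lsmul : ∀ (r : R) (c : C.C), e (r • c) = r • e c
  e_rsmul : ∀ (r : Rᵐᵒᵖ) (c : C.C), e (r • c) = r • e c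
  e_gr : ∀ (n : ℕ) (c : C.C), c ∈ C.gr n ↔ e c ∈ D.gr n
  e_ε : ∀ c : C.C, D.ε (e c) = C.ε c
  e_η : ∀ r : R, e (C.η r) = D.η r
  e_Δ : ∀ c : C.C,
    D.Δ (e c) = PTensor.map e.toAddMonoidHom e.toAddMonoidHom
      (fun r m => e_rsmul (op r) m) e_lsmul (C.Δ c)

end Isos




end

end KP


/-!
Write `θ̃ = θ ∘ proj¹ : C → A¹`, so that `d_l(c ⊗ a) = Σ c₁ ⊗ θ̃(c₂)·a`. Applying `d_l` twice
and using coassociativity gives `Σ c₁ ⊗ μ(Δ c₂)·a` with `μ(x ⊗ y) = θ̃(x)·θ̃(y)`. Since `Δ` is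
graded and `θ̃` vanishes off `C¹`, `μ ∘ Δ` vanishes off `C²`, and on `C²` it vanishes by the
pre-Koszul condition. Colinearity of `d_l` is coassociativity once more, and `d_l` lowers the
`C`-degree by one because `θ̃` only sees `C¹`. The right complex is the mirror image.
-/

namespace KP

noncomputable section

open MulOpposite

variable {R : Type} [Ring R]

namespace GRing

variable (B : GRing R)

theorem gmulC_zerol {p q r : ℕ} (h : p + q = r) (y : B.cmp q) :
    B.gmulC h (0 : B.cmp p) y = 0 :=
  Subtype.ext (zero_mul (y : B.A))

theorem gmulC_zeror {p q r : ℕ} (h : p + q = r) (x : B.cmp p) :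
    B.gmulC h x (0 : B.cmp q) = 0 :=
  Subtype.ext (mul_zero (x : B.A))

theorem gmulC_assoc {p q r pq qr n : ℕ} (hpq : p + q = pq) (hqr : q + r = qr)
    (h₁ : pq + r = n) (h₂ : p + qr = n) (x : B.cmp p) (y : B.cmp q) (z : B.cmp r) :
    B.gmulC h₁ (B.gmulC hpq x y) z = B.gmulC h₂ x (B.gmulC hqr y z) :=
  Subtype.ext (mul_assoc _ _ _)

end GRing

namespace PreGCoring

variable (D : PreGCoring R)

def assocL (W : Type) [AddCommGroup W] [Module R W] (w : W) :
    PTensor R D.C D.C →+ PTensor R D.C (PTensor R D.C W) :=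
  PTensor.lift (fun x y => x ⊙[R] (y ⊙[R] w))
    (fun x x' y => by rw [PTensor.add_tmul])
    (fun x y y' => by rw [PTensor.add_tmul, PTensor.tmul_add])
    (fun s x y => by rw [PTensor.balance, PTensor.lsmul_tmul])

theorem assocL_tmul (W : Type) [AddCommGroup W] [Module R W] (w : W) (x y : D.C) :
    D.assocL W w (x ⊙[R] y) = x ⊙[R] (y ⊙[R] w) :=
  PTensor.lift_tmul _ _ _ _ x y

def assocR (V : Type) [AddCommGroup V] [Module Rᵐᵒᵖ V] (v : V) :
    PTensor R D.C D.C →+ PTensor R (PTensor R V D.C) D.C :=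
  PTensor.lift (fun x y => (v ⊙[R] x) ⊙[R] y)
    (fun x x' y => by rw [PTensor.tmul_add, PTensor.add_tmul])
    (fun x y y' => by rw [PTensor.tmul_add])
    (fun s x y => by rw [← PTensor.rsmul_tmul, PTensor.balance])

theorem assocR_tmul (V : Type) [AddCommGroup V] [Module Rᵐᵒᵖ V] (v : V) (x y : D.C) :
    D.assocR V v (x ⊙[R] y) = (v ⊙[R] x) ⊙[R] y :=
  PTensor.lift_tmul _ _ _ _ x y

theorem assocR_add (V : Type) [AddCommGroup V] [Module Rᵐᵒᵖ V] (v v' : V) :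
    D.assocR V (v + v') = D.assocR V v + D.assocR V v' :=
  PTensor.addHom_ext fun x y => by
    simp only [AddMonoidHom.add_apply, assocR_tmul, PTensor.add_tmul]

theorem assocR_op_smul (V : Type) [AddCommGroup V] [Module Rᵐᵒᵖ V] (r : R) (v : V)
    (w : PTensor R D.C D.C) :
    D.assocR V (op r • v) w = D.assocR V v (r • w) := by
  induction w using PTensor.ind with
  | h0 => simp
  | htm x y => rw [PTensor.lsmul_tmul, assocR_tmul, assocR_tmul, PTensor.balance]
  | hadd x y hx hy => rw [smul_add, map_add, map_add, hx, hy]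

theorem ΔL_tmul (x y : D.C) : D.ΔL (x ⊙[R] y) = D.assocL D.C y (D.Δ x) :=
  PTensor.lift_tmul _ _ _ _ x y

theorem ΔR_tmul (x y : D.C) : D.ΔR (x ⊙[R] y) = x ⊙[R] D.Δ y :=
  PTensor.map_tmul _ _ _ _ x y

end PreGCoring

namespace GCoring

variable (C : GCoring R)

theorem map_Δ_mem {M : Type} [AddCommGroup M] (f : PTensor R C.C C.C →+ M)
    (S : AddSubgroup M) {n : ℕ}
    (hf : ∀ (p q : ℕ) (x y : C.C), p + q = n → x ∈ C.gr p → y ∈ C.gr q → f (x ⊙[R] y) ∈ S)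
    {c : C.C} (hc : c ∈ C.gr n) : f (C.Δ c) ∈ S := by
  refine (AddSubgroup.closure_le (K := S.comap f)).2 ?_ (C.graded n c hc)
  rintro _ ⟨p, q, x, y, hpq, hx, hy, rfl⟩
  exact hf p q x y hpq hx hy

end GCoring

namespace KTheta

variable {A : ConnGRing R} {C : ConnGCoring R} (t : KTheta A C)

theorem til_eq_zero {q : ℕ} {y : C.C} (hy : y ∈ C.gr q) (hq : q ≠ 1) : t.til y = 0 := by
  show t.θ (C.proj 1 y) = 0
  rw [C.proj_of_mem_ne hy hq, map_zero]

def mu2 : PTensor R C.C C.C →+ A.cmp 2 :=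
  PTensor.lift (fun x y => A.gmulC rfl (t.til x) (t.til y))
    (fun x x' y => by rw [map_add, GRing.gmulC_addl])
    (fun x y y' => by rw [map_add, GRing.gmulC_addr])
    (fun r x y => by rw [t.til_rsmul, GRing.gmulC_bal, t.til_lsmul])

theorem mu2_tmul (x y : C.C) : t.mu2 (x ⊙[R] y) = A.gmulC rfl (t.til x) (t.til y) :=
  PTensor.lift_tmul _ _ _ _ x y

theorem incl_comp_mu2 : (A.incl 2).comp t.mu2 = t.mu :=
  PTensor.addHom_ext fun x y => by
    rw [AddMonoidHom.comp_apply, mu2_tmul, mu, PTensor.lift_tmul]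
    rfl

theorem mu2_lsmul (r : R) (w : PTensor R C.C C.C) : t.mu2 (r • w) = r • t.mu2 w := by
  induction w using PTensor.ind with
  | h0 => simp
  | htm x y =>
      rw [PTensor.lsmul_tmul, t.mu2_tmul, t.mu2_tmul, t.til_lsmul, GRing.gmulC_lsmull]
  | hadd x y hx hy => rw [smul_add, map_add, map_add, hx, hy, smul_add]

/-- Off degree two this holds because `θ̃` vanishes off `C¹`; in degree two it is the
pre-Koszul condition. -/
theorem mu2_Δ_eq_zero (hpk : t.IsPreKoszul) (c : C.C) : t.mu2 (C.Δ c) = 0 := by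
  induction c using DirectSum.Decomposition.inductionOn C.gr with
  | zero => rw [map_zero, map_zero]
  | @homogeneous i c =>
      by_cases hi : i = 2
      · subst hi
        apply Subtype.ext
        exact (DFunLike.congr_fun t.incl_comp_mu2 _).trans (hpk _ c.2)
      · refine AddSubgroup.mem_bot.1 (C.map_Δ_mem t.mu2 ⊥ (fun p q x y hpq hx hy => ?_) c.2)
        rw [AddSubgroup.mem_bot, t.mu2_tmul]
        by_cases hp : p = 1
        · rw [t.til_eq_zero hy (by omega), GRing.gmulC_zeror]
        · rw [t.til_eq_zero hx hp, GRing.gmulC_zerol]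
  | add c c' hc hc' => rw [map_add, map_add, hc, hc', add_zero]

def thetaMulL (n : ℕ) (a : A.cmp n) : PTensor R C.C C.C →+ Kl A C (n + 1) :=
  PTensor.lift (fun x y => x ⊙[R] A.gmulC (Nat.add_comm 1 n) (t.til y) a)
    (fun x x' y => by rw [PTensor.add_tmul])
    (fun x y y' => by rw [map_add, GRing.gmulC_addl, PTensor.tmul_add])
    (fun r x y => by rw [PTensor.balance, t.til_lsmul, GRing.gmulC_lsmull])

theorem thetaMulL_tmul (n : ℕ) (a : A.cmp n) (x y : C.C) :
    t.thetaMulL n a (x ⊙[R] y) = x ⊙[R] A.gmulC (Nat.add_comm 1 n) (t.til y) a :=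
  PTensor.lift_tmul _ _ _ _ x y

theorem dl_tmul_eq_thetaMulL (n : ℕ) (c : C.C) (a : A.cmp n) :
    t.dl n (c ⊙[R] a) = t.thetaMulL n a (C.Δ c) :=
  t.dl_tmul n c a

theorem thetaMulL_lsmul (n : ℕ) (a : A.cmp n) (r : R) (w : PTensor R C.C C.C) :
    t.thetaMulL n a (r • w) = r • t.thetaMulL n a w := by
  induction w using PTensor.ind with
  | h0 => simp
  | htm x y => rw [PTensor.lsmul_tmul, t.thetaMulL_tmul, t.thetaMulL_tmul, PTensor.lsmul_tmul]
  | hadd x y hx hy => rw [smul_add, map_add, map_add, hx, hy, smul_add]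

def muMulL (n : ℕ) (a : A.cmp n) : PTensor R C.C (PTensor R C.C C.C) →+ Kl A C (n + 2) :=
  PTensor.lift (fun x w => x ⊙[R] A.gmulC (Nat.add_comm 2 n) (t.mu2 w) a)
    (fun x x' w => by rw [PTensor.add_tmul])
    (fun x w w' => by rw [map_add, GRing.gmulC_addl, PTensor.tmul_add])
    (fun r x w => by rw [PTensor.balance, ← GRing.gmulC_lsmull, ← t.mu2_lsmul])

theorem muMulL_tmul (n : ℕ) (a : A.cmp n) (x : C.C) (w : PTensor R C.C C.C) :
    t.muMulL n a (x ⊙[R] w) = x ⊙[R] A.gmulC (Nat.add_comm 2 n) (t.mu2 w) a :=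
  PTensor.lift_tmul _ _ _ _ x w

theorem thetaMulL_til_mul (n : ℕ) (a : A.cmp n) (y : C.C) :
    t.thetaMulL (n + 1) (A.gmulC (Nat.add_comm 1 n) (t.til y) a) =
      (t.muMulL n a).comp (C.assocL C.C y) :=
  PTensor.addHom_ext fun x₁ x₂ => by
    rw [AddMonoidHom.comp_apply, thetaMulL_tmul, PreGCoring.assocL_tmul, muMulL_tmul, mu2_tmul,
      GRing.gmulC_assoc]

theorem dl_comp_thetaMulL (n : ℕ) (a : A.cmp n) :
    (t.dl (n + 1)).comp (t.thetaMulL n a) = (t.muMulL n a).comp C.ΔL :=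
  PTensor.addHom_ext fun x y => by
    simp only [AddMonoidHom.comp_apply, thetaMulL_tmul, dl_tmul_eq_thetaMulL,
      thetaMulL_til_mul, PreGCoring.ΔL_tmul]

theorem muMulL_comp_ΔR (hpk : t.IsPreKoszul) (n : ℕ) (a : A.cmp n) :
    (t.muMulL n a).comp C.ΔR = 0 :=
  PTensor.addHom_ext fun x y => by
    rw [AddMonoidHom.comp_apply, PreGCoring.ΔR_tmul, muMulL_tmul, t.mu2_Δ_eq_zero hpk,
      GRing.gmulC_zerol, PTensor.tmul_zero, AddMonoidHom.zero_apply]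

theorem dl_comp_dl (hpk : t.IsPreKoszul) (n : ℕ) : (t.dl (n + 1)).comp (t.dl n) = 0 :=
  PTensor.addHom_ext fun c a => calc
    t.dl (n + 1) (t.dl n (c ⊙[R] a)) = t.muMulL n a (C.ΔL (C.Δ c)) := by
      rw [dl_tmul_eq_thetaMulL, ← AddMonoidHom.comp_apply, dl_comp_thetaMulL,
        AddMonoidHom.comp_apply]
    _ = t.muMulL n a (C.ΔR (C.Δ c)) := by rw [C.coassoc]
    _ = 0 := DFunLike.congr_fun (t.muMulL_comp_ΔR hpk n a) _

theorem rhoLK_tmul (n : ℕ) (c : C.C) (a : A.cmp n) :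
    rhoLK A C n (c ⊙[R] a) = C.assocL (A.cmp n) a (C.Δ c) :=
  PTensor.lift_tmul _ _ _ _ c a

abbrev idTensorThetaMulL (n : ℕ) (a : A.cmp n) :
    PTensor R C.C (PTensor R C.C C.C) →+ PTensor R C.C (Kl A C (n + 1)) :=
  PTensor.map (AddMonoidHom.id C.C) (t.thetaMulL n a) (fun _ _ => rfl) (t.thetaMulL_lsmul n a)

theorem assocL_eq_idTensorThetaMulL (n : ℕ) (a : A.cmp n) (y : C.C) :
    C.assocL (A.cmp (n + 1)) (A.gmulC (Nat.add_comm 1 n) (t.til y) a) =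
      (t.idTensorThetaMulL n a).comp (C.assocL C.C y) :=
  PTensor.addHom_ext fun x₁ x₂ => by
    rw [AddMonoidHom.comp_apply, PreGCoring.assocL_tmul, PreGCoring.assocL_tmul,
      PTensor.map_tmul, thetaMulL_tmul]
    rfl

theorem rhoLK_comp_thetaMulL (n : ℕ) (a : A.cmp n) :
    (rhoLK A C (n + 1)).comp (t.thetaMulL n a) = (t.idTensorThetaMulL n a).comp C.ΔL :=
  PTensor.addHom_ext fun x y => by
    simp only [AddMonoidHom.comp_apply, thetaMulL_tmul, rhoLK_tmul,
      assocL_eq_idTensorThetaMulL, PreGCoring.ΔL_tmul]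

theorem idTensorDl_comp_assocL (n : ℕ) (a : A.cmp n) :
    (PTensor.map (AddMonoidHom.id C.C) (t.dl n) (fun _ _ => rfl) (t.dl_lsmul n)).comp
      (C.assocL (A.cmp n) a) = (t.idTensorThetaMulL n a).comp C.ΔR :=
  PTensor.addHom_ext fun x y => by
    rw [AddMonoidHom.comp_apply, AddMonoidHom.comp_apply, PreGCoring.assocL_tmul,
      PTensor.map_tmul, PreGCoring.ΔR_tmul, PTensor.map_tmul, dl_tmul_eq_thetaMulL]

theorem rhoLK_comp_dl (n : ℕ) :
    (rhoLK A C (n + 1)).comp (t.dl n) =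
      (PTensor.map (AddMonoidHom.id C.C) (t.dl n) (fun _ _ => rfl) (t.dl_lsmul n)).comp
        (rhoLK A C n) :=
  PTensor.addHom_ext fun c a => calc
    rhoLK A C (n + 1) (t.dl n (c ⊙[R] a)) = t.idTensorThetaMulL n a (C.ΔL (C.Δ c)) := by
      rw [dl_tmul_eq_thetaMulL, ← AddMonoidHom.comp_apply, rhoLK_comp_thetaMulL,
        AddMonoidHom.comp_apply]
    _ = t.idTensorThetaMulL n a (C.ΔR (C.Δ c)) := by rw [C.coassoc]
    _ = PTensor.map (AddMonoidHom.id C.C) (t.dl n) (fun _ _ => rfl) (t.dl_lsmul n)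
          (rhoLK A C n (c ⊙[R] a)) := by
      rw [rhoLK_tmul]
      exact (DFunLike.congr_fun (t.idTensorDl_comp_assocL n a) _).symm

theorem dl_mem_KlPiece (p n : ℕ) {x : Kl A C n} (hx : x ∈ KlPiece A C (p + 1) n) :
    t.dl n x ∈ KlPiece A C p (n + 1) := by
  refine (AddSubgroup.closure_le (K := (KlPiece A C p (n + 1)).comap (t.dl n))).2 ?_ hx
  rintro _ ⟨c, hc, a, rfl⟩
  rw [SetLike.mem_coe, AddSubgroup.mem_comap, dl_tmul_eq_thetaMulL]
  refine C.map_Δ_mem _ _ (fun p' q x y hpq hxp hy => ?_) hc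
  rw [thetaMulL_tmul]
  by_cases hq : q = 1
  · obtain rfl : p' = p := by omega
    exact AddSubgroup.subset_closure ⟨x, hxp, _, rfl⟩
  · rw [t.til_eq_zero hy hq, GRing.gmulC_zerol, PTensor.tmul_zero]
    exact zero_mem _

def thetaMulR (n : ℕ) (a : A.cmp n) : PTensor R C.C C.C →+ Kr A C (n + 1) :=
  PTensor.lift (fun x y => A.gmulC rfl a (t.til x) ⊙[R] y)
    (fun x x' y => by rw [map_add, GRing.gmulC_addr, PTensor.add_tmul])
    (fun x y y' => by rw [PTensor.tmul_add])
    (fun r x y => by rw [t.til_rsmul, GRing.gmulC_rsmulr, PTensor.balance])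

theorem thetaMulR_tmul (n : ℕ) (a : A.cmp n) (x y : C.C) :
    t.thetaMulR n a (x ⊙[R] y) = A.gmulC rfl a (t.til x) ⊙[R] y :=
  PTensor.lift_tmul _ _ _ _ x y

theorem dr_tmul_eq_thetaMulR (n : ℕ) (a : A.cmp n) (c : C.C) :
    t.dr n (a ⊙[R] c) = t.thetaMulR n a (C.Δ c) :=
  t.dr_tmul n a c

theorem thetaMulR_add (n : ℕ) (a a' : A.cmp n) :
    t.thetaMulR n (a + a') = t.thetaMulR n a + t.thetaMulR n a' :=
  PTensor.addHom_ext fun x y => by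
    simp only [AddMonoidHom.add_apply, thetaMulR_tmul, GRing.gmulC_addl, PTensor.add_tmul]

theorem thetaMulR_op_smul (n : ℕ) (r : R) (a : A.cmp n) (w : PTensor R C.C C.C) :
    t.thetaMulR n (op r • a) w = t.thetaMulR n a (r • w) := by
  induction w using PTensor.ind with
  | h0 => simp
  | htm x y =>
      rw [PTensor.lsmul_tmul, t.thetaMulR_tmul, t.thetaMulR_tmul, GRing.gmulC_bal, t.til_lsmul]
  | hadd w w' hw hw' => rw [smul_add, map_add, map_add, hw, hw']

def muMulR (n : ℕ) (a : A.cmp n) : PTensor R C.C (PTensor R C.C C.C) →+ Kr A C (n + 2) :=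
  PTensor.lift (fun x w => t.thetaMulR (n + 1) (A.gmulC rfl a (t.til x)) w)
    (fun x x' w => by
      rw [map_add, GRing.gmulC_addr, thetaMulR_add, AddMonoidHom.add_apply])
    (fun x w w' => by rw [map_add])
    (fun r x w => by rw [t.til_rsmul, GRing.gmulC_rsmulr, thetaMulR_op_smul])

theorem muMulR_tmul (n : ℕ) (a : A.cmp n) (x : C.C) (w : PTensor R C.C C.C) :
    t.muMulR n a (x ⊙[R] w) = t.thetaMulR (n + 1) (A.gmulC rfl a (t.til x)) w :=
  PTensor.lift_tmul _ _ _ _ x w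

theorem dr_comp_thetaMulR (n : ℕ) (a : A.cmp n) :
    (t.dr (n + 1)).comp (t.thetaMulR n a) = (t.muMulR n a).comp C.ΔR :=
  PTensor.addHom_ext fun x y => by
    simp only [AddMonoidHom.comp_apply, thetaMulR_tmul, dr_tmul_eq_thetaMulR,
      PreGCoring.ΔR_tmul, muMulR_tmul]

theorem muMulR_assocL (n : ℕ) (a : A.cmp n) (y : C.C) (w : PTensor R C.C C.C) :
    t.muMulR n a (C.assocL C.C y w) = A.gmulC rfl a (t.mu2 w) ⊙[R] y := by
  induction w using PTensor.ind with
  | h0 => rw [map_zero, map_zero, map_zero, GRing.gmulC_zeror, PTensor.zero_tmul]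
  | htm x₁ x₂ =>
      rw [PreGCoring.assocL_tmul, muMulR_tmul, thetaMulR_tmul, mu2_tmul, GRing.gmulC_assoc]
  | hadd w w' hw hw' =>
      rw [map_add, map_add, hw, hw', map_add, GRing.gmulC_addr, PTensor.add_tmul]

theorem muMulR_comp_ΔL (hpk : t.IsPreKoszul) (n : ℕ) (a : A.cmp n) :
    (t.muMulR n a).comp C.ΔL = 0 :=
  PTensor.addHom_ext fun x y => by
    rw [AddMonoidHom.comp_apply, PreGCoring.ΔL_tmul, muMulR_assocL, t.mu2_Δ_eq_zero hpk,
      GRing.gmulC_zeror, PTensor.zero_tmul, AddMonoidHom.zero_apply]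

theorem dr_comp_dr (hpk : t.IsPreKoszul) (n : ℕ) : (t.dr (n + 1)).comp (t.dr n) = 0 :=
  PTensor.addHom_ext fun a c => calc
    t.dr (n + 1) (t.dr n (a ⊙[R] c)) = t.muMulR n a (C.ΔR (C.Δ c)) := by
      rw [dr_tmul_eq_thetaMulR, ← AddMonoidHom.comp_apply, dr_comp_thetaMulR,
        AddMonoidHom.comp_apply]
    _ = t.muMulR n a (C.ΔL (C.Δ c)) := by rw [C.coassoc]
    _ = 0 := DFunLike.congr_fun (t.muMulR_comp_ΔL hpk n a) _

theorem rhoRK_tmul (n : ℕ) (a : A.cmp n) (c : C.C) :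
    rhoRK A C n (a ⊙[R] c) = C.assocR (A.cmp n) a (C.Δ c) :=
  PTensor.lift_tmul _ _ _ _ a c

def assocRThetaMul (n : ℕ) (a : A.cmp n) :
    PTensor R C.C (PTensor R C.C C.C) →+ PTensor R (Kr A C (n + 1)) C.C :=
  PTensor.lift (fun x w => C.assocR (A.cmp (n + 1)) (A.gmulC rfl a (t.til x)) w)
    (fun x x' w => by
      rw [map_add, GRing.gmulC_addr, PreGCoring.assocR_add, AddMonoidHom.add_apply])
    (fun x w w' => by rw [map_add])
    (fun r x w => by rw [t.til_rsmul, GRing.gmulC_rsmulr, PreGCoring.assocR_op_smul])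

theorem assocRThetaMul_tmul (n : ℕ) (a : A.cmp n) (x : C.C) (w : PTensor R C.C C.C) :
    t.assocRThetaMul n a (x ⊙[R] w) = C.assocR (A.cmp (n + 1)) (A.gmulC rfl a (t.til x)) w :=
  PTensor.lift_tmul _ _ _ _ x w

theorem rhoRK_comp_thetaMulR (n : ℕ) (a : A.cmp n) :
    (rhoRK A C (n + 1)).comp (t.thetaMulR n a) = (t.assocRThetaMul n a).comp C.ΔR :=
  PTensor.addHom_ext fun x y => by
    simp only [AddMonoidHom.comp_apply, thetaMulR_tmul, rhoRK_tmul, PreGCoring.ΔR_tmul,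
      assocRThetaMul_tmul]

theorem assocRThetaMul_assocL (n : ℕ) (a : A.cmp n) (y : C.C) (w : PTensor R C.C C.C) :
    t.assocRThetaMul n a (C.assocL C.C y w) = t.thetaMulR n a w ⊙[R] y := by
  induction w using PTensor.ind with
  | h0 => rw [map_zero, map_zero, map_zero, PTensor.zero_tmul]
  | htm x₁ x₂ =>
      rw [PreGCoring.assocL_tmul, assocRThetaMul_tmul, PreGCoring.assocR_tmul, thetaMulR_tmul]
  | hadd w w' hw hw' => rw [map_add, map_add, hw, hw', map_add, PTensor.add_tmul]

theorem drTensorId_comp_assocR (n : ℕ) (a : A.cmp n) :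
    (PTensor.map (t.dr n) (AddMonoidHom.id C.C) (fun r w => t.dr_rsmul n (op r) w)
      (fun _ _ => rfl)).comp (C.assocR (A.cmp n) a) = (t.assocRThetaMul n a).comp C.ΔL :=
  PTensor.addHom_ext fun x y => by
    rw [AddMonoidHom.comp_apply, AddMonoidHom.comp_apply, PreGCoring.assocR_tmul,
      PTensor.map_tmul, PreGCoring.ΔL_tmul, assocRThetaMul_assocL, dr_tmul_eq_thetaMulR]
    rfl

theorem rhoRK_comp_dr (n : ℕ) :
    (rhoRK A C (n + 1)).comp (t.dr n) =
      (PTensor.map (t.dr n) (AddMonoidHom.id C.C) (fun r w => t.dr_rsmul n (op r) w)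
        (fun _ _ => rfl)).comp (rhoRK A C n) :=
  PTensor.addHom_ext fun a c => calc
    rhoRK A C (n + 1) (t.dr n (a ⊙[R] c)) = t.assocRThetaMul n a (C.ΔR (C.Δ c)) := by
      rw [dr_tmul_eq_thetaMulR, ← AddMonoidHom.comp_apply, rhoRK_comp_thetaMulR,
        AddMonoidHom.comp_apply]
    _ = t.assocRThetaMul n a (C.ΔL (C.Δ c)) := by rw [C.coassoc]
    _ = PTensor.map (t.dr n) (AddMonoidHom.id C.C) (fun r w => t.dr_rsmul n (op r) w)
          (fun _ _ => rfl) (rhoRK A C n (a ⊙[R] c)) := by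
      rw [rhoRK_tmul]
      exact (DFunLike.congr_fun (t.drTensorId_comp_assocR n a) _).symm

theorem dr_mem_KrPiece (p n : ℕ) {x : Kr A C n} (hx : x ∈ KrPiece A C (p + 1) n) :
    t.dr n x ∈ KrPiece A C p (n + 1) := by
  refine (AddSubgroup.closure_le (K := (KrPiece A C p (n + 1)).comap (t.dr n))).2 ?_ hx
  rintro _ ⟨c, hc, a, rfl⟩
  rw [SetLike.mem_coe, AddSubgroup.mem_comap, dr_tmul_eq_thetaMulR]
  refine C.map_Δ_mem _ _ (fun q p' x y hpq hx hyp => ?_) hc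
  rw [thetaMulR_tmul]
  by_cases hq : q = 1
  · obtain rfl : p' = p := by omega
    exact AddSubgroup.subset_closure ⟨y, hyp, _, rfl⟩
  · rw [t.til_eq_zero hx hq, GRing.gmulC_zeror, PTensor.zero_tmul]
    exact zero_mem _

end KTheta

end

end KP

open KP MulOpposite in
theorem statement0_general (R : Type) [Ring R]
    (A : ConnGRing R) (C : ConnGCoring R) (t : KTheta A C)
    (hpk : t.IsPreKoszul) :
    -- `K_l^•` is a complex:
    (∀ (n : ℕ) (x : Kl A C n), t.dl (n + 1) (t.dl n x) = 0) ∧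
    -- each `d_l^n` is a morphism of left `C`-comodules:
    (∀ (n : ℕ) (x : Kl A C n),
      rhoLK A C (n + 1) (t.dl n x) =
        PTensor.map (AddMonoidHom.id C.C) (t.dl n) (fun _ _ => rfl)
          (fun r w => t.dl_lsmul n r w) (rhoLK A C n x)) ∧
    -- each `d_l^n` respects the gradings:
    (∀ (p n : ℕ) (x : Kl A C n), x ∈ KlPiece A C (p + 1) n →
      t.dl n x ∈ KlPiece A C p (n + 1)) ∧
    -- `K_r^•` is a complex:
    (∀ (n : ℕ) (x : Kr A C n), t.dr (n + 1) (t.dr n x) = 0) ∧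
    -- each `d_r^n` is a morphism of right `C`-comodules:
    (∀ (n : ℕ) (x : Kr A C n),
      rhoRK A C (n + 1) (t.dr n x) =
        PTensor.map (t.dr n) (AddMonoidHom.id C.C)
          (fun r w => t.dr_rsmul n (op r) w) (fun _ _ => rfl) (rhoRK A C n x)) ∧
    -- each `d_r^n` respects the gradings:
    (∀ (p n : ℕ) (x : Kr A C n), x ∈ KrPiece A C (p + 1) n →
      t.dr n x ∈ KrPiece A C p (n + 1)) :=
  ⟨fun n => DFunLike.congr_fun (t.dl_comp_dl hpk n),
    fun n => DFunLike.congr_fun (t.rhoLK_comp_dl n),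
    fun p n _ => t.dl_mem_KlPiece p n,
    fun n => DFunLike.congr_fun (t.dr_comp_dr hpk n),
    fun n => DFunLike.congr_fun (t.rhoRK_comp_dr n),
    fun p n _ => t.dr_mem_KrPiece p n⟩

open KP MulOpposite in
/-- Proposition `pr:GradedComodules`.
For a pre-Koszul pair `(A, C)` over a semisimple ring `R`:
`(K_l^•(A,C), d_l^•)` is a cochain complex in the category of graded left
`C`-comodules (i.e. `d_l ∘ d_l = 0`, every `d_l^n` is left `C`-colinear, and
`d_l^n` maps the graded piece `C^{p+1} ⊗ A^n` into `C^p ⊗ A^{n+1}`), and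
analogously `(K_r^•(A,C), d_r^•)` is a cochain complex in the category of
graded right `C`-comodules. -/
theorem statement0 (R : Type) [Ring R] [IsSemisimpleRing R]
    (A : ConnGRing R) (C : ConnGCoring R) (t : KTheta A C)
    (hpk : t.IsPreKoszul) :
    -- `K_l^•` is a complex:
    (∀ (n : ℕ) (x : Kl A C n), t.dl (n + 1) (t.dl n x) = 0) ∧
    -- each `d_l^n` is a morphism of left `C`-comodules:
    (∀ (n : ℕ) (x : Kl A C n),
      rhoLK A C (n + 1) (t.dl n x) =
        PTensor.map (AddMonoidHom.id C.C) (t.dl n) (fun _ _ => rfl)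
          (fun r w => t.dl_lsmul n r w) (rhoLK A C n x)) ∧
    -- each `d_l^n` respects the gradings:
    (∀ (p n : ℕ) (x : Kl A C n), x ∈ KlPiece A C (p + 1) n →
      t.dl n x ∈ KlPiece A C p (n + 1)) ∧
    -- `K_r^•` is a complex:
    (∀ (n : ℕ) (x : Kr A C n), t.dr (n + 1) (t.dr n x) = 0) ∧
    -- each `d_r^n` is a morphism of right `C`-comodules:
    (∀ (n : ℕ) (x : Kr A C n),
      rhoRK A C (n + 1) (t.dr n x) =
        PTensor.map (t.dr n) (AddMonoidHom.id C.C)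
          (fun r w => t.dr_rsmul n (op r) w) (fun _ _ => rfl) (rhoRK A C n x)) ∧
    -- each `d_r^n` respects the gradings:
    (∀ (p n : ℕ) (x : Kr A C n), x ∈ KrPiece A C (p + 1) n →
      t.dr n x ∈ KrPiece A C p (n + 1)) :=
  statement0_general R A C t hpk
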